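/- arXiv:math/0504081 — 4 statements merged into one kernel-verified Lean document; each statement's English description precedes it below -/
import Mathlib

section
/- Let Γ be a coalgebra over a field k, e ∈ D Γ an idempotent, and Λ ⊆ Γ a subcoalgebra. Then for every right Γ-comodule map f : Λ → Γe (where Λ carries its canonical right Γ-comodule structure), the image of f is contained in Λe; consequently Hom_{Γ}(Λ, Γe) = Hom_{Γ}(Λ, Λe). -/
/-!
Since `e` is idempotent, `↼ e` is a projection, so every `f x ∈ Γe` satisfies `f x = f x ↼ e`.
As `f` is a comodule map, `f x ↼ e = Σ e(f x₍₀₎) x₍₁₎` where `ρ x = Σ x₍₀₎ ⊗ x₍₁₎`, and since `Λ`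
is a subcoalgebra and `ρ` is the restriction of `Δ`, the `x₍₁₎` can be taken in `Λ`.
Hence `f x ∈ Λ`, and `f x = f x ↼ e ∈ Λe`.
-/

open TensorProduct LinearMap

noncomputable section

universe u

section DualAlgebra

variable (k : Type u) [Field k]
variable (Γ : Type u) [AddCommGroup Γ] [Module k Γ] [Coalgebra k Γ]

/-- Convolution product on the dual algebra `D Γ = Hom_k(Γ, k)`:
`(f * g)(γ) = Σ f(γ₍₁₎) g(γ₍₂₎)`. -/
def conv (f g : Module.Dual k Γ) : Module.Dual k Γ :=
  LinearMap.mul' k k ∘ₗ TensorProduct.map f g ∘ₗ Coalgebra.comul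

/-- The right hit action `γ ↼ e = Σ e(γ₍₁₎) γ₍₂₎`, as a linear endomap of `Γ`. -/
def rhit (e : Module.Dual k Γ) : Γ →ₗ[k] Γ :=
  (TensorProduct.lid k Γ).toLinearMap ∘ₗ e.rTensor Γ ∘ₗ Coalgebra.comul

/-- The left hit action `e ⇀ γ = Σ γ₍₁₎ e(γ₍₂₎)`, as a linear endomap of `Γ`. -/
def lhit (e : Module.Dual k Γ) : Γ →ₗ[k] Γ :=
  (TensorProduct.rid k Γ).toLinearMap ∘ₗ e.lTensor Γ ∘ₗ Coalgebra.comul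

/-- A subspace `Λ ⊆ Γ` is a subcoalgebra if `Δ(Λ) ⊆ Λ ⊗ Λ`. -/
def IsSubcoalgebra (p : Submodule k Γ) : Prop :=
  ∀ x ∈ p, Coalgebra.comul (R := k) x ∈ LinearMap.range (TensorProduct.mapIncl p p)

end DualAlgebra

/-- A right `Γ`-comodule: a `k`-vector space with a coassociative counital coaction
`ρ : M → M ⊗ Γ`. -/
structure RComod (k : Type u) [Field k] (Γ : Type u)
    [AddCommGroup Γ] [Module k Γ] [Coalgebra k Γ] where
  carrier : Type u
  [acg : AddCommGroup carrier]
  [mod : Module k carrier]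
  coact : carrier →ₗ[k] carrier ⊗[k] Γ
  coassoc : (TensorProduct.assoc k carrier Γ Γ).toLinearMap ∘ₗ coact.rTensor Γ ∘ₗ coact
      = (Coalgebra.comul (R := k) (A := Γ)).lTensor carrier ∘ₗ coact
  counit_id : (TensorProduct.rid k carrier).toLinearMap ∘ₗ
      (Coalgebra.counit (R := k) (A := Γ)).lTensor carrier ∘ₗ coact = LinearMap.id

attribute [instance] RComod.acg RComod.mod

variable {k : Type u} [Field k] {Γ : Type u} [AddCommGroup Γ] [Module k Γ] [Coalgebra k Γ]

/-- A morphism of right `Γ`-comodules. -/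
@[ext] structure RComodHom (M N : RComod k Γ) where
  toFun : M.carrier →ₗ[k] N.carrier
  comm : N.coact ∘ₗ toFun = toFun.rTensor Γ ∘ₗ M.coact

/-- The identity comodule morphism. -/
def RComodHom.id (M : RComod k Γ) : RComodHom M M :=
  ⟨LinearMap.id, by simp⟩

/-- Composition of comodule morphisms. -/
def RComodHom.comp {M N P : RComod k Γ} (f : RComodHom N P) (g : RComodHom M N) :
    RComodHom M P :=
  ⟨f.toFun ∘ₗ g.toFun, by
    ext x
    have hf := LinearMap.congr_fun f.comm (g.toFun x)
    have hg := LinearMap.congr_fun g.comm x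
    simp only [LinearMap.comp_apply] at hf hg ⊢
    rw [hf, hg, ← LinearMap.comp_apply, ← LinearMap.rTensor_comp]⟩

/-- `g : B → C` is a split epimorphism of comodules. -/
def IsSplitEpi {B C : RComod k Γ} (g : RComodHom B C) : Prop :=
  ∃ s : RComodHom C B, g.comp s = RComodHom.id C

/-- `f : A → B` is a split monomorphism of comodules. -/
def IsSplitMono {A B : RComod k Γ} (f : RComodHom A B) : Prop :=
  ∃ r : RComodHom B A, r.comp f = RComodHom.id A

/-- `0 → A →f B →g C → 0` is a short exact sequence of comodules. -/
structure IsExactSeq {A B C : RComod k Γ} (f : RComodHom A B) (g : RComodHom B C) : Prop where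
  inj : Function.Injective f.toFun
  surj : Function.Surjective g.toFun
  exact : LinearMap.range f.toFun = LinearMap.ker g.toFun

/-- A comodule is indecomposable iff it is nonzero and its only idempotent
endomorphisms are `0` and the identity. -/
def Indecomposable (M : RComod k Γ) : Prop :=
  Nontrivial M.carrier ∧
    ∀ e : RComodHom M M, e.comp e = e → e = RComodHom.id M ∨ e.toFun = 0

/-- The space of comodule morphisms `M → N`, as a subspace of the linear maps. -/
def homSubmodule (M N : RComod k Γ) : Submodule k (M.carrier →ₗ[k] N.carrier) where
  carrier := {f | N.coact ∘ₗ f = f.rTensor Γ ∘ₗ M.coact}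
  add_mem' := by
    intro f g hf hg
    simp only [Set.mem_setOf_eq] at *
    rw [LinearMap.comp_add, hf, hg, LinearMap.rTensor_add, LinearMap.add_comp]
  zero_mem' := by simp
  smul_mem' := by
    intro c f hf
    simp only [Set.mem_setOf_eq] at *
    rw [LinearMap.comp_smul, hf, LinearMap.rTensor_smul, LinearMap.smul_comp]

/-- A comodule is quasifinite if `Hom(F, M)` is finite-dimensional for every
finite-dimensional comodule `F`. -/
def Quasifinite (M : RComod k Γ) : Prop :=
  ∀ F : RComod k Γ, FiniteDimensional k F.carrier →
    FiniteDimensional k ↥(homSubmodule F M)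

/-- `0 → A →f B →g C → 0` is an almost split (Auslander–Reiten) sequence. -/
structure IsAlmostSplit {A B C : RComod k Γ} (f : RComodHom A B) (g : RComodHom B C) :
    Prop where
  exact : IsExactSeq f g
  nonsplit : ¬ IsSplitEpi g
  indecA : Indecomposable A
  indecC : Indecomposable C
  lift : ∀ (X : RComod k Γ) (u : RComodHom X C), ¬ IsSplitEpi u →
    ∃ h : RComodHom X B, g.comp h = u
  extend : ∀ (X : RComod k Γ) (v : RComodHom A X), ¬ IsSplitMono v →
    ∃ h : RComodHom B X, h.comp f = v

/-- `C` is projective in the category of right `Γ`-comodules. -/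
def IsProjectiveComod (P : RComod k Γ) : Prop :=
  ∀ (B C : RComod k Γ) (g : RComodHom B C), Function.Surjective g.toFun →
    ∀ u : RComodHom P C, ∃ h : RComodHom P B, g.comp h = u

/-- A subspace of a comodule which is a subcomodule. -/
def IsSubcomodule (M : RComod k Γ) (p : Submodule k M.carrier) : Prop :=
  ∀ x ∈ p, M.coact x ∈ LinearMap.range (p.subtype.rTensor Γ)

end

noncomputable section

variable (k : Type u) [Field k]
variable (Γ : Type u) [AddCommGroup Γ] [Module k Γ] [Coalgebra k Γ]

section TensorSubmodule

variable {k}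
variable {M N P : Type*} [AddCommGroup M] [Module k M] [AddCommGroup N] [Module k N]
  [AddCommGroup P] [Module k P]

-- Over a field every module is flat, so `p ⊗ N → P ⊗ N` is injective.
lemma mem_range_lTensor_subtype_of_rTensor_subtype_mem_range_mapIncl
    {p : Submodule k P} {q : Submodule k N} {y : p ⊗[k] N}
    (hy : p.subtype.rTensor N y ∈ range (mapIncl p q)) :
    y ∈ range (q.subtype.lTensor p) := by
  obtain ⟨t, ht⟩ := hy
  refine ⟨t, Module.Flat.rTensor_preserves_injective_linearMap p.subtype
    p.injective_subtype ?_⟩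
  rw [← ht, ← comp_apply, rTensor_comp_lTensor]

lemma lid_rTensor_mem_of_mem_range_lTensor_subtype (φ : Module.Dual k M)
    {q : Submodule k N} {y : M ⊗[k] N} (hy : y ∈ range (q.subtype.lTensor M)) :
    TensorProduct.lid k N (φ.rTensor N y) ∈ q := by
  obtain ⟨t, rfl⟩ := hy
  have hcomm : (TensorProduct.lid k N).toLinearMap ∘ₗ φ.rTensor N ∘ₗ q.subtype.lTensor M
      = q.subtype ∘ₗ (TensorProduct.lid k q).toLinearMap ∘ₗ φ.rTensor q := by
    ext m n
    simp
  exact congr($hcomm t) ▸ (TensorProduct.lid k q (φ.rTensor q t)).2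

end TensorSubmodule

lemma rhit_comp_rhit (f g : Module.Dual k Γ) :
    rhit k Γ g ∘ₗ rhit k Γ f = rhit k Γ (conv k Γ f g) := by
  have hnat : Coalgebra.comul ∘ₗ (TensorProduct.lid k Γ).toLinearMap ∘ₗ f.rTensor Γ
      = (TensorProduct.lid k (Γ ⊗[k] Γ)).toLinearMap ∘ₗ f.rTensor (Γ ⊗[k] Γ) ∘ₗ
          (Coalgebra.comul (R := k) (A := Γ)).lTensor Γ := by
    ext a b
    simp
  have hmul : (TensorProduct.lid k Γ).toLinearMap ∘ₗ g.rTensor Γ ∘ₗ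
        (TensorProduct.lid k (Γ ⊗[k] Γ)).toLinearMap ∘ₗ f.rTensor (Γ ⊗[k] Γ) ∘ₗ
        (TensorProduct.assoc k Γ Γ Γ).toLinearMap
      = (TensorProduct.lid k Γ).toLinearMap ∘ₗ (mul' k k ∘ₗ TensorProduct.map f g).rTensor Γ := by
    ext a b c
    simp [smul_tmul']
  calc rhit k Γ g ∘ₗ rhit k Γ f
      = (TensorProduct.lid k Γ).toLinearMap ∘ₗ g.rTensor Γ ∘ₗ
          (Coalgebra.comul ∘ₗ (TensorProduct.lid k Γ).toLinearMap ∘ₗ f.rTensor Γ) ∘ₗ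
          Coalgebra.comul := by
        simp only [rhit, comp_assoc]
    _ = (TensorProduct.lid k Γ).toLinearMap ∘ₗ g.rTensor Γ ∘ₗ
          (TensorProduct.lid k (Γ ⊗[k] Γ)).toLinearMap ∘ₗ f.rTensor (Γ ⊗[k] Γ) ∘ₗ
          ((Coalgebra.comul (R := k) (A := Γ)).lTensor Γ ∘ₗ Coalgebra.comul) := by
        rw [hnat]
        simp only [comp_assoc]
    _ = ((TensorProduct.lid k Γ).toLinearMap ∘ₗ g.rTensor Γ ∘ₗ
          (TensorProduct.lid k (Γ ⊗[k] Γ)).toLinearMap ∘ₗ f.rTensor (Γ ⊗[k] Γ) ∘ₗ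
          (TensorProduct.assoc k Γ Γ Γ).toLinearMap) ∘ₗ
          (Coalgebra.comul (R := k) (A := Γ)).rTensor Γ ∘ₗ Coalgebra.comul := by
        rw [← Coalgebra.coassoc]
        simp only [comp_assoc]
    _ = rhit k Γ (conv k Γ f g) := by
        rw [hmul]
        simp only [rhit, conv, rTensor_comp, comp_assoc]

lemma rhit_apply_of_mem_range_rhit {e : Module.Dual k Γ} (he : conv k Γ e e = e) {γ : Γ}
    (hγ : γ ∈ range (rhit k Γ e)) : rhit k Γ e γ = γ := by
  obtain ⟨γ, rfl⟩ := hγ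
  rw [← comp_apply, rhit_comp_rhit, he]

lemma rhit_apply_of_comul_apply_eq {M : Type*} [AddCommGroup M] [Module k M]
    (e : Module.Dual k Γ) (ρ : M →ₗ[k] M ⊗[k] Γ) (f : M →ₗ[k] Γ) {x : M}
    (hx : Coalgebra.comul (R := k) (f x) = TensorProduct.map f LinearMap.id (ρ x)) :
    rhit k Γ e (f x) = TensorProduct.lid k Γ ((e ∘ₗ f).rTensor Γ (ρ x)) := by
  rw [rhit, comp_apply, comp_apply, hx, ← comp_apply (e.rTensor Γ), rTensor_comp_map]
  rfl

/-- Let `e ∈ D Γ` be an idempotent and `Λ ⊆ Γ` a subcoalgebra,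
carrying its canonical right `Γ`-comodule structure `ρ` (characterized by `hρ`: the
coaction is the restriction of the comultiplication).  Then every right `Γ`-comodule
map `f : Λ → Γe` (encoded as a linear map `f : Λ → Γ` with range inside
`Γe = Γ ↼ e` that commutes with the coactions) has image contained in `Λe = Λ ↼ e`;
consequently `Hom_Γ(Λ, Γe) = Hom_Γ(Λ, Λe)`. -/
theorem comodule_map_from_subcoalgebra_lands_in_hit_of_subcoalgebra
    (e : Module.Dual k Γ) (he : conv k Γ e e = e)
    (Λ : Submodule k Γ) (hΛ : IsSubcoalgebra k Γ Λ)
    (ρ : ↥Λ →ₗ[k] ↥Λ ⊗[k] Γ)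
    (hρ : ∀ x : ↥Λ, TensorProduct.map Λ.subtype LinearMap.id (ρ x)
      = Coalgebra.comul (R := k) (x : Γ))
    (f : ↥Λ →ₗ[k] Γ)
    (hrange : ∀ x : ↥Λ, f x ∈ LinearMap.range (rhit k Γ e))
    (hcomod : ∀ x : ↥Λ, Coalgebra.comul (R := k) (f x)
      = TensorProduct.map f LinearMap.id (ρ x)) :
    ∀ x : ↥Λ, f x ∈ Submodule.map (rhit k Γ e) Λ := by
  intro x
  have hfix := rhit_apply_of_mem_range_rhit k Γ he (hrange x)
  have hρx : ρ x ∈ range (Λ.subtype.lTensor Λ) :=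
    mem_range_lTensor_subtype_of_rTensor_subtype_mem_range_mapIncl ((hρ x).symm ▸ hΛ x x.2)
  have hfx : f x ∈ Λ := by
    rw [← hfix, rhit_apply_of_comul_apply_eq k Γ e ρ f (hcomod x)]
    exact lid_rTensor_mem_of_mem_range_lTensor_subtype _ hρx
  exact ⟨f x, hfx, hfix⟩

end
end

section
/- Let Γ be a coalgebra over a field k. A right Γ-comodule M is quasifinite (i.e. Hom_Γ(F, M) is finite-dimensional for every finite-dimensional right Γ-comodule F) if and only if every simple right Γ-comodule occurs with finite multiplicity in the socle of M. -/
open TensorProduct LinearMap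

noncomputable section

variable {k : Type u} [Field k]
variable {Γ : Type u} [AddCommGroup Γ] [Module k Γ] [Coalgebra k Γ]

/-- A simple right `Γ`-comodule: nonzero, with no subcomodules other than `⊥` and `⊤`. -/
def IsSimpleComod (S : RComod k Γ) : Prop :=
  Nontrivial S.carrier ∧ ∀ p : Submodule k S.carrier, IsSubcomodule S p → p = ⊥ ∨ p = ⊤

/-- The `S`-isotypic component of the socle of `M`: the sum of all simple subcomodules
of `M` isomorphic to `S` (realized as the sup of the ranges of all injective comodule
morphisms `S → M`).  `S` occurs with finite multiplicity in `soc(M)` precisely when this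
subspace is finite-dimensional. -/
def comodIsotypicComponent (M S : RComod k Γ) : Submodule k M.carrier :=
  sSup {p : Submodule k M.carrier |
    ∃ f : RComodHom S M, Function.Injective f.toFun ∧ LinearMap.range f.toFun = p}


/-! ### Auxiliary material for the proof -/

section Aux

open Submodule

namespace QF

variable {V W : Type u} [AddCommGroup V] [Module k V] [AddCommGroup W] [Module k W]

lemma comp_cancel_left {A B C : Type u} [AddCommGroup A] [Module k A] [AddCommGroup B]
    [Module k B] [AddCommGroup C] [Module k C] {f g : A →ₗ[k] B} (J : B →ₗ[k] C)
    (hJ : Function.Injective J) (h : J ∘ₗ f = J ∘ₗ g) : f = g :=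
  LinearMap.ext fun x => hJ (LinearMap.congr_fun h x)

lemma comp_cancel_right {A B C : Type u} [AddCommGroup A] [Module k A] [AddCommGroup B]
    [Module k B] [AddCommGroup C] [Module k C] {f g : B →ₗ[k] C} (π : A →ₗ[k] B)
    (hπ : Function.Surjective π) (h : f ∘ₗ π = g ∘ₗ π) : f = g :=
  LinearMap.ext fun x => by obtain ⟨y, rfl⟩ := hπ x; exact LinearMap.congr_fun h y

lemma rid_nat (f : V →ₗ[k] W) :
    (TensorProduct.rid k W).toLinearMap ∘ₗ f.rTensor k
      = f ∘ₗ (TensorProduct.rid k V).toLinearMap := by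
  apply TensorProduct.ext'; intros; simp

lemma assoc_nat (f : V →ₗ[k] W) :
    (TensorProduct.assoc k W Γ Γ).toLinearMap ∘ₗ ((f.rTensor Γ).rTensor Γ)
      = f.rTensor (Γ ⊗[k] Γ) ∘ₗ (TensorProduct.assoc k V Γ Γ).toLinearMap := by
  apply TensorProduct.ext_threefold; intros; simp

lemma fd_of_ker_range (r : V →ₗ[k] W) (h1 : FiniteDimensional k (LinearMap.ker r))
    (h2 : FiniteDimensional k (LinearMap.range r)) : FiniteDimensional k V := by
  obtain ⟨q, hq⟩ := Submodule.exists_isCompl (LinearMap.ker r)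
  have hqfd : FiniteDimensional k q := by
    have inj : Function.Injective
        ((r.codRestrict (LinearMap.range r) (fun x => LinearMap.mem_range_self r x)) ∘ₗ
          q.subtype) := by
      intro x y hxy
      have hv : r x.1 = r y.1 := congrArg Subtype.val hxy
      have hxy' : x.1 - y.1 ∈ LinearMap.ker r ⊓ q :=
        ⟨by simp [LinearMap.mem_ker, map_sub, hv], sub_mem x.2 y.2⟩
      rw [hq.inf_eq_bot] at hxy'
      exact Subtype.ext (by simpa [sub_eq_zero] using hxy')
    exact FiniteDimensional.of_injective _ inj
  exact Module.Finite.equiv (Submodule.prodEquivOfIsCompl _ _ hq)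

/-- The equivalence `V ⊗ Γ ≃ (ι →₀ V)` obtained from a basis of `Γ`. -/
def Phi {ι : Type u} [DecidableEq ι] (b : Module.Basis ι k Γ) :
    (V ⊗[k] Γ) ≃ₗ[k] (ι →₀ V) :=
  (TensorProduct.congr (LinearEquiv.refl k V) b.repr).trans
    (TensorProduct.finsuppScalarRight k k V ι)

lemma Phi_symm_single {ι : Type u} [DecidableEq ι] (b : Module.Basis ι k Γ) (i : ι) (m : V) :
    (Phi b).symm (Finsupp.single i m) = m ⊗ₜ[k] b i := by
  simp only [Phi, LinearEquiv.trans_symm, LinearEquiv.trans_apply,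
    TensorProduct.finsuppScalarRight_symm_apply_single, TensorProduct.congr_symm_tmul,
    LinearEquiv.refl_symm, LinearEquiv.refl_apply]
  rw [Module.Basis.repr_symm_apply, Finsupp.linearCombination_single, one_smul]

lemma tensor_decomp {ι : Type u} [DecidableEq ι] (b : Module.Basis ι k Γ) (t : V ⊗[k] Γ) :
    t = ∑ i ∈ (Phi b t).support, (Phi b t i) ⊗ₜ[k] b i := by
  conv_lhs => rw [← (Phi b).symm_apply_apply t, ← Finsupp.sum_single (Phi b t)]
  rw [Finsupp.sum, map_sum]
  exact Finset.sum_congr rfl fun i _ => Phi_symm_single b i _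

end QF

namespace QF

variable (F : RComod k Γ) (p : Submodule k F.carrier)

lemma rT_subtype_inj (A : Type u) [AddCommGroup A] [Module k A] :
    Function.Injective ((p.subtype).rTensor A) :=
  Module.Flat.rTensor_preserves_injective_linearMap _ p.injective_subtype

variable (hp : IsSubcomodule F p)
include hp

/-- The induced coaction on a subcomodule. -/
def subCoact : ↥p →ₗ[k] ↥p ⊗[k] Γ :=
  (LinearEquiv.ofInjective _ (rT_subtype_inj F p Γ)).symm.toLinearMap ∘ₗ
    LinearMap.codRestrict (LinearMap.range ((p.subtype).rTensor Γ)) (F.coact ∘ₗ p.subtype)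
      (fun x => hp x.1 x.2)

lemma subCoact_prop :
    (p.subtype).rTensor Γ ∘ₗ subCoact F p hp = F.coact ∘ₗ p.subtype := by
  ext x
  have h : ∀ z : LinearMap.range ((p.subtype).rTensor Γ),
      (p.subtype).rTensor Γ ((LinearEquiv.ofInjective _ (rT_subtype_inj F p Γ)).symm z)
        = z.1 := by
    intro z
    conv_rhs => rw [← (LinearEquiv.ofInjective _ (rT_subtype_inj F p Γ)).apply_symm_apply z]
    rw [LinearEquiv.ofInjective_apply]
  simp only [LinearMap.comp_apply, subCoact, LinearEquiv.coe_coe]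
  rw [h]
  rfl

/-- The subcomodule as a comodule. -/
def subComod : RComod k Γ where
  carrier := ↥p
  coact := subCoact F p hp
  coassoc := by
    have key := subCoact_prop F p hp
    set σ := p.subtype with hσ
    set ρ := subCoact F p hp with hρ
    have keyx : ∀ x, (σ.rTensor Γ) (ρ x) = F.coact (σ x) := fun x => by
      have := LinearMap.congr_fun key x
      simpa only [LinearMap.comp_apply] using this
    apply comp_cancel_left (σ.rTensor (Γ ⊗[k] Γ)) (rT_subtype_inj F p (Γ ⊗[k] Γ))
    apply LinearMap.ext; intro x
    simp only [LinearMap.comp_apply, LinearEquiv.coe_coe]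
    have h1 := LinearMap.congr_fun (assoc_nat (k := k) (Γ := Γ) σ) ((ρ.rTensor Γ) (ρ x))
    simp only [LinearMap.comp_apply, LinearEquiv.coe_coe] at h1
    rw [← h1]
    have h2 : ((σ.rTensor Γ).rTensor Γ) ((ρ.rTensor Γ) (ρ x))
        = (F.coact.rTensor Γ) (F.coact (σ x)) := by
      rw [← LinearMap.comp_apply ((σ.rTensor Γ).rTensor Γ), ← LinearMap.rTensor_comp, key,
        LinearMap.rTensor_comp]
      simp only [LinearMap.comp_apply]
      rw [keyx x]
    rw [h2]
    have h3 := LinearMap.congr_fun F.coassoc (σ x)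
    simp only [LinearMap.comp_apply, LinearEquiv.coe_coe] at h3
    rw [h3]
    have h4 : (σ.rTensor (Γ ⊗[k] Γ)) ∘ₗ ((Coalgebra.comul (R := k) (A := Γ)).lTensor ↥p)
        = ((Coalgebra.comul (R := k) (A := Γ)).lTensor F.carrier) ∘ₗ (σ.rTensor Γ) := by
      rw [LinearMap.rTensor_comp_lTensor, LinearMap.lTensor_comp_rTensor]
    have h5 := LinearMap.congr_fun h4 (ρ x)
    simp only [LinearMap.comp_apply] at h5
    rw [h5, keyx x]
  counit_id := by
    have key := subCoact_prop F p hp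
    set σ := p.subtype with hσ
    set ρ := subCoact F p hp with hρ
    have keyx : ∀ x, (σ.rTensor Γ) (ρ x) = F.coact (σ x) := fun x => by
      have := LinearMap.congr_fun key x
      simpa only [LinearMap.comp_apply] using this
    apply comp_cancel_left σ p.injective_subtype
    apply LinearMap.ext; intro x
    simp only [LinearMap.comp_apply, LinearEquiv.coe_coe, LinearMap.id_apply]
    have h1 := LinearMap.congr_fun (rid_nat (k := k) σ)
      (((Coalgebra.counit (R := k) (A := Γ)).lTensor ↥p) (ρ x))
    simp only [LinearMap.comp_apply, LinearEquiv.coe_coe] at h1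
    rw [← h1]
    have h2 : ((Coalgebra.counit (R := k) (A := Γ)).lTensor F.carrier) ∘ₗ (σ.rTensor Γ)
        = (σ.rTensor k) ∘ₗ ((Coalgebra.counit (R := k) (A := Γ)).lTensor ↥p) := by
      rw [LinearMap.rTensor_comp_lTensor, LinearMap.lTensor_comp_rTensor]
    have h3 := LinearMap.congr_fun h2 (ρ x)
    simp only [LinearMap.comp_apply] at h3
    rw [← h3, keyx x]
    have h4 := LinearMap.congr_fun F.counit_id (σ x)
    simp only [LinearMap.comp_apply, LinearEquiv.coe_coe, LinearMap.id_apply] at h4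
    exact h4

@[simp] lemma subComod_carrier : (subComod F p hp).carrier = ↥p := rfl

@[simp] lemma subComod_coact : (subComod F p hp).coact = subCoact F p hp := rfl

/-- The inclusion of a subcomodule is a comodule map. -/
def inclHom : RComodHom (subComod F p hp) F :=
  ⟨p.subtype, (subCoact_prop F p hp).symm⟩

lemma mkQ_rT_kills : ∀ x ∈ p, ((p.mkQ).rTensor Γ) (F.coact x) = 0 := by
  intro x hx
  obtain ⟨w, hw⟩ := hp x hx
  rw [← hw, ← LinearMap.comp_apply, ← LinearMap.rTensor_comp]
  have : p.mkQ ∘ₗ p.subtype = 0 := by ext y; simp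
  rw [this]
  simp

/-- The induced coaction on the quotient comodule. -/
def quotCoact : (F.carrier ⧸ p) →ₗ[k] (F.carrier ⧸ p) ⊗[k] Γ :=
  Submodule.liftQ p ((p.mkQ).rTensor Γ ∘ₗ F.coact)
    (fun x hx => by
      simp only [LinearMap.mem_ker, LinearMap.comp_apply]
      exact mkQ_rT_kills F p hp x hx)

lemma quotCoact_prop :
    quotCoact F p hp ∘ₗ p.mkQ = (p.mkQ).rTensor Γ ∘ₗ F.coact :=
  Submodule.liftQ_mkQ _ _ _

/-- The quotient comodule. -/
def quotComod : RComod k Γ where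
  carrier := F.carrier ⧸ p
  coact := quotCoact F p hp
  coassoc := by
    have key := quotCoact_prop F p hp
    set π := p.mkQ with hπ
    set ρ := quotCoact F p hp with hρ
    have keyx : ∀ y, ρ (π y) = (π.rTensor Γ) (F.coact y) := fun y => by
      have := LinearMap.congr_fun key y
      simpa only [LinearMap.comp_apply] using this
    apply comp_cancel_right π p.mkQ_surjective
    apply LinearMap.ext; intro y
    simp only [LinearMap.comp_apply, LinearEquiv.coe_coe]
    rw [keyx y]
    have h2 : (ρ.rTensor Γ) ((π.rTensor Γ) (F.coact y))
        = ((π.rTensor Γ).rTensor Γ) ((F.coact.rTensor Γ) (F.coact y)) := by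
      rw [← LinearMap.comp_apply (ρ.rTensor Γ), ← LinearMap.rTensor_comp, key,
        LinearMap.rTensor_comp]
      rfl
    rw [h2]
    have h1 := LinearMap.congr_fun (assoc_nat (k := k) (Γ := Γ) π)
      ((F.coact.rTensor Γ) (F.coact y))
    simp only [LinearMap.comp_apply, LinearEquiv.coe_coe] at h1
    rw [h1]
    have h3 := LinearMap.congr_fun F.coassoc y
    simp only [LinearMap.comp_apply, LinearEquiv.coe_coe] at h3
    rw [h3]
    have h4 : ((Coalgebra.comul (R := k) (A := Γ)).lTensor (F.carrier ⧸ p))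
          ∘ₗ (π.rTensor Γ)
        = (π.rTensor (Γ ⊗[k] Γ)) ∘ₗ ((Coalgebra.comul (R := k) (A := Γ)).lTensor F.carrier) := by
      rw [LinearMap.rTensor_comp_lTensor, LinearMap.lTensor_comp_rTensor]
    exact (LinearMap.congr_fun h4 (F.coact y)).symm
  counit_id := by
    have key := quotCoact_prop F p hp
    set π := p.mkQ with hπ
    set ρ := quotCoact F p hp with hρ
    have keyx : ∀ y, ρ (π y) = (π.rTensor Γ) (F.coact y) := fun y => by
      have := LinearMap.congr_fun key y
      simpa only [LinearMap.comp_apply] using this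
    apply comp_cancel_right π p.mkQ_surjective
    apply LinearMap.ext; intro y
    simp only [LinearMap.comp_apply, LinearEquiv.coe_coe, LinearMap.id_apply]
    rw [keyx y]
    have h2 : ((Coalgebra.counit (R := k) (A := Γ)).lTensor (F.carrier ⧸ p))
          ∘ₗ (π.rTensor Γ)
        = (π.rTensor k) ∘ₗ ((Coalgebra.counit (R := k) (A := Γ)).lTensor F.carrier) := by
      rw [LinearMap.rTensor_comp_lTensor, LinearMap.lTensor_comp_rTensor]
    have h2' := LinearMap.congr_fun h2 (F.coact y)
    simp only [LinearMap.comp_apply] at h2'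
    rw [h2']
    have h1 := LinearMap.congr_fun (rid_nat (k := k) π)
      (((Coalgebra.counit (R := k) (A := Γ)).lTensor F.carrier) (F.coact y))
    simp only [LinearMap.comp_apply, LinearEquiv.coe_coe] at h1
    rw [h1]
    have h4 := LinearMap.congr_fun F.counit_id y
    simp only [LinearMap.comp_apply, LinearEquiv.coe_coe, LinearMap.id_apply] at h4
    rw [h4]

@[simp] lemma quotComod_carrier : (quotComod F p hp).carrier = (F.carrier ⧸ p) := rfl

@[simp] lemma quotComod_coact : (quotComod F p hp).coact = quotCoact F p hp := rfl


end QF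

end Aux

section Aux2

open Submodule

namespace QF

/-! ### Fundamental theorem of comodules and simple subcomodules -/

lemma Phi_apply_tmul_apply {ι : Type u} [DecidableEq ι] (b : Module.Basis ι k Γ)
    {V : Type u} [AddCommGroup V] [Module k V] (m : V) (γ : Γ) (i : ι) :
    Phi b (m ⊗ₜ[k] γ) i = b.repr γ i • m := by
  simp [Phi]

/-- Every element of a comodule lies in a finite-dimensional subcomodule. -/
lemma exists_fd_subcomodule (S : RComod k Γ) (x : S.carrier) :
    ∃ W : Submodule k S.carrier, FiniteDimensional k ↥W ∧ x ∈ W ∧ IsSubcomodule S W := by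
  classical
  set b := Module.Basis.ofVectorSpace k Γ with hb
  set t := S.coact x with ht
  set c : _ →₀ S.carrier := Phi b t with hc
  set Wset : Finset S.carrier := c.support.image (fun i => c i) with hWset
  set W : Submodule k S.carrier := Submodule.span k (Wset : Set S.carrier) with hW
  have hWfd : FiniteDimensional k ↥W := FiniteDimensional.span_of_finite k (Wset.finite_toSet)
  have hmem : ∀ i, c i ∈ W := by
    intro i
    by_cases hi : i ∈ c.support
    · exact Submodule.subset_span (Finset.mem_image_of_mem _ hi)
    · rw [Finsupp.notMem_support_iff.mp hi]; exact zero_mem W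
  have hdecomp : t = ∑ i ∈ c.support, (c i) ⊗ₜ[k] (b i : Γ) := tensor_decomp b t
  have hxW : x ∈ W := by
    have h0 := LinearMap.congr_fun S.counit_id x
    simp only [LinearMap.comp_apply, LinearEquiv.coe_coe, LinearMap.id_apply] at h0
    rw [← ht] at h0
    rw [← h0, hdecomp, map_sum, map_sum]
    refine Submodule.sum_mem W fun i _ => ?_
    rw [LinearMap.lTensor_tmul, TensorProduct.rid_tmul]
    exact Submodule.smul_mem W _ (hmem i)
  have hcoact_mem : ∀ i, S.coact (c i) ∈ LinearMap.range (W.subtype.rTensor Γ) := by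
    intro i
    set P : S.carrier ⊗[k] Γ →ₗ[k] S.carrier :=
      (Finsupp.lapply i) ∘ₗ (Phi b).toLinearMap with hP
    set Q : (S.carrier ⊗[k] Γ) ⊗[k] Γ →ₗ[k] S.carrier ⊗[k] Γ :=
      (Finsupp.lapply i) ∘ₗ (Phi (V := S.carrier ⊗[k] Γ) b).toLinearMap with hQd
    have hnat : S.coact ∘ₗ P = Q ∘ₗ (S.coact.rTensor Γ) := by
      apply TensorProduct.ext'
      intro m γ
      simp only [hP, hQd, LinearMap.comp_apply, LinearEquiv.coe_coe, Finsupp.lapply_apply,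
        LinearMap.rTensor_tmul]
      rw [Phi_apply_tmul_apply, Phi_apply_tmul_apply, map_smul]
    have hPt : P t = c i := by simp [hP, hc, Finsupp.lapply_apply]
    have h1 : S.coact (c i) = Q ((S.coact.rTensor Γ) t) := by
      rw [← hPt]
      have := LinearMap.congr_fun hnat t
      simpa only [LinearMap.comp_apply] using this
    have h2 := LinearMap.congr_fun S.coassoc x
    simp only [LinearMap.comp_apply, LinearEquiv.coe_coe] at h2
    have h3 : (S.coact.rTensor Γ) t =
        (TensorProduct.assoc k S.carrier Γ Γ).symm
          (((Coalgebra.comul (R := k) (A := Γ)).lTensor S.carrier) t) := by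
      rw [← ht] at h2
      rw [← h2, LinearEquiv.symm_apply_apply]
    have key : ∀ m ∈ W, ∀ u : Γ ⊗[k] Γ,
        Q ((TensorProduct.assoc k S.carrier Γ Γ).symm (m ⊗ₜ[k] u))
          ∈ LinearMap.range (W.subtype.rTensor Γ) := by
      intro m hm u
      induction u using TensorProduct.induction_on with
      | zero => rw [TensorProduct.tmul_zero, map_zero, map_zero]; exact zero_mem _
      | tmul a g =>
        rw [TensorProduct.assoc_symm_tmul]
        have hQv : Q ((m ⊗ₜ[k] a) ⊗ₜ[k] g) = b.repr g i • (m ⊗ₜ[k] a) := by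
          simp only [hQd, LinearMap.comp_apply, LinearEquiv.coe_coe, Finsupp.lapply_apply]
          rw [Phi_apply_tmul_apply]
        rw [hQv]
        exact ⟨b.repr g i • ((⟨m, hm⟩ : ↥W) ⊗ₜ[k] a), by
          rw [map_smul, LinearMap.rTensor_tmul]; rfl⟩
      | add u v hu hv =>
        rw [TensorProduct.tmul_add, map_add, map_add]
        exact add_mem hu hv
    rw [h1, h3, hdecomp, map_sum, map_sum, map_sum]
    refine Submodule.sum_mem _ fun j _ => ?_
    rw [LinearMap.lTensor_tmul]
    exact key (c j) (hmem j) _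
  refine ⟨W, hWfd, hxW, ?_⟩
  intro y hy
  induction hy using Submodule.span_induction with
  | mem g hg =>
    obtain ⟨i, _, rfl⟩ := Finset.mem_image.mp hg
    exact hcoact_mem i
  | zero => rw [map_zero]; exact zero_mem _
  | add y z _ _ hy hz => rw [map_add]; exact add_mem hy hz
  | smul a y _ hy => rw [map_smul]; exact Submodule.smul_mem _ a hy

lemma top_subcomodule (F : RComod k Γ) : IsSubcomodule F ⊤ := by
  intro x _
  have hsurj : Function.Surjective ((⊤ : Submodule k F.carrier).subtype) :=
    fun y => ⟨⟨y, trivial⟩, rfl⟩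
  exact LinearMap.rTensor_surjective Γ hsurj (F.coact x)

lemma ker_subcomodule {S M : RComod k Γ} (f : RComodHom S M) :
    IsSubcomodule S (LinearMap.ker f.toFun) := by
  intro x hx
  have hex : Function.Exact ((LinearMap.ker f.toFun).subtype.rTensor Γ) (f.toFun.rTensor Γ) :=
    Module.Flat.rTensor_exact Γ f.toFun.exact_subtype_ker_map
  have h0 : (f.toFun.rTensor Γ) (S.coact x) = 0 := by
    have hcomm := LinearMap.congr_fun f.comm x
    simp only [LinearMap.comp_apply] at hcomm
    rw [← hcomm, LinearMap.mem_ker.mp hx, map_zero]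
  obtain ⟨w, hw⟩ := (hex (S.coact x)).mp h0
  exact ⟨w, hw⟩

/-- A nontrivial finite-dimensional comodule has a simple subcomodule. -/
lemma exists_simple_sub (F : RComod k Γ) [hFfd : FiniteDimensional k F.carrier]
    (hF : Nontrivial F.carrier) :
    ∃ (p : Submodule k F.carrier) (hp : IsSubcomodule F p), p ≠ ⊥ ∧
      IsSimpleComod (subComod F p hp) := by
  classical
  set T : Set ℕ :=
    {n | ∃ p : Submodule k F.carrier, (IsSubcomodule F p ∧ p ≠ ⊥) ∧ Module.finrank k ↥p = n} with hT
  have hTmem : sInf T ∈ T :=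
    Nat.sInf_mem ⟨Module.finrank k (⊤ : Submodule k F.carrier), ⊤,
      ⟨top_subcomodule F, bot_ne_top.symm⟩, rfl⟩
  obtain ⟨p, ⟨hp, hpne⟩, hrank⟩ := hTmem
  haveI hpnt : Nontrivial ↥p := Submodule.nontrivial_iff_ne_bot.mpr hpne
  refine ⟨p, hp, hpne, hpnt, ?_⟩
  intro q hq
  by_cases hqb : q = ⊥
  · exact Or.inl hqb
  right
  set σ := p.subtype with hσ
  have keyx : ∀ y : ↥p, (σ.rTensor Γ) (subCoact F p hp y) = F.coact (σ y) := fun y => by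
    have := LinearMap.congr_fun (subCoact_prop F p hp) y
    simpa only [LinearMap.comp_apply] using this
  set q' : Submodule k F.carrier := q.map σ with hq'd
  have hq'ne : q' ≠ ⊥ := by
    obtain ⟨y, hy, hyne⟩ := (Submodule.ne_bot_iff q).mp hqb
    refine (Submodule.ne_bot_iff q').mpr ⟨σ y, Submodule.mem_map_of_mem hy, ?_⟩
    exact fun h => hyne (Subtype.ext h)
  have hq'sub : IsSubcomodule F q' := by
    intro xx hxx
    obtain ⟨y, hy, rfl⟩ := Submodule.mem_map.mp hxx
    obtain ⟨z, hz⟩ := hq y hy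
    have hcr : ∀ cc : ↥q, (σ ∘ₗ q.subtype) cc ∈ q' :=
      fun cc => Submodule.mem_map_of_mem cc.2
    refine ⟨(((σ ∘ₗ q.subtype).codRestrict q' hcr).rTensor Γ) z, ?_⟩
    rw [← LinearMap.comp_apply, ← LinearMap.rTensor_comp,
      LinearMap.subtype_comp_codRestrict]
    erw [LinearMap.rTensor_comp, LinearMap.comp_apply]
    have h5 : (LinearMap.rTensor Γ σ) ((LinearMap.rTensor Γ q.subtype) z)
        = (LinearMap.rTensor Γ σ) ((subComod F p hp).coact y) := congrArg _ hz
    exact h5.trans (keyx y)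
  have hle : sInf T ≤ Module.finrank k ↥q' := Nat.sInf_le ⟨q', ⟨hq'sub, hq'ne⟩, rfl⟩
  have hq'le : q' ≤ p := Submodule.map_subtype_le p q
  have heq : q' = p := Submodule.eq_of_le_of_finrank_le hq'le (by rw [hrank]; exact hle)
  have hmapeq : q.map σ = (⊤ : Submodule k ↥p).map σ := by
    rw [Submodule.map_subtype_top, ← hq'd, heq]
  exact Submodule.map_injective_of_injective p.injective_subtype hmapeq

lemma mem_homSubmodule {F M : RComod k Γ} (f : F.carrier →ₗ[k] M.carrier) :
    f ∈ homSubmodule F M ↔ M.coact ∘ₗ f = f.rTensor Γ ∘ₗ F.coact := Iff.rfl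

lemma hom_fd_of_subsingleton (M F : RComod k Γ) (h : Subsingleton F.carrier) :
    FiniteDimensional k ↥(homSubmodule F M) := by
  haveI : Subsingleton (F.carrier →ₗ[k] M.carrier) :=
    ⟨fun f g => LinearMap.ext fun x => by rw [Subsingleton.elim x 0, map_zero, map_zero]⟩
  haveI : Subsingleton ↥(homSubmodule F M) := ⟨fun a b => Subtype.ext (Subsingleton.elim _ _)⟩
  exact Module.Finite.of_finite

lemma hom_zero_or_injective (M S : RComod k Γ) (hS : IsSimpleComod S)
    (g : S.carrier →ₗ[k] M.carrier) (hg : g ∈ homSubmodule S M) :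
    g = 0 ∨ Function.Injective g := by
  set G : RComodHom S M := ⟨g, hg⟩
  rcases hS.2 _ (ker_subcomodule G) with hbot | htop
  · right
    rw [← LinearMap.ker_eq_bot (M := S.carrier)]
    exact hbot
  · left
    ext x
    have : x ∈ LinearMap.ker g := htop ▸ Submodule.mem_top
    simpa using this

lemma hom_range_le (M S : RComod k Γ) (hS : IsSimpleComod S)
    (g : S.carrier →ₗ[k] M.carrier) (hg : g ∈ homSubmodule S M) :
    LinearMap.range g ≤ comodIsotypicComponent M S := by
  rcases hom_zero_or_injective M S hS g hg with h0 | hinj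
  · subst h0; rw [LinearMap.range_zero]; exact bot_le
  · exact le_sSup ⟨⟨g, hg⟩, hinj, rfl⟩

lemma simpleHomFin (M S : RComod k Γ) (hS : IsSimpleComod S)
    (hfd : FiniteDimensional k ↥(comodIsotypicComponent M S)) :
    FiniteDimensional k ↥(homSubmodule S M) := by
  classical
  by_cases hz : homSubmodule S M = ⊥
  · rw [hz]
    haveI : Subsingleton ↥(⊥ : Submodule k (S.carrier →ₗ[k] M.carrier)) := inferInstance
    exact Module.Finite.of_finite
  · obtain ⟨g, hgmem, hgne⟩ : ∃ g ∈ homSubmodule S M, g ≠ 0 := by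
      by_contra h
      push_neg at h
      exact hz (eq_bot_iff.mpr fun f hf => Submodule.mem_bot k |>.mpr (h f hf))
    have hginj : Function.Injective g :=
      (hom_zero_or_injective M S hS g hgmem).resolve_left hgne
    haveI : FiniteDimensional k ↥(LinearMap.range g) :=
      Submodule.finiteDimensional_of_le (hom_range_le M S hS g hgmem)
    haveI : FiniteDimensional k S.carrier :=
      Module.Finite.equiv (LinearEquiv.ofInjective g hginj).symm
    let Ψ : ↥(homSubmodule S M) →ₗ[k] (S.carrier →ₗ[k] ↥(comodIsotypicComponent M S)) :=
      { toFun := fun f => LinearMap.codRestrict _ f.1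
          (fun x => hom_range_le M S hS f.1 f.2 (LinearMap.mem_range_self _ x))
        map_add' := fun f h => by ext x; rfl
        map_smul' := fun c f => by ext x; rfl }
    have hΨ : Function.Injective Ψ := by
      intro a b hab
      apply Subtype.ext
      ext x
      exact congrArg Subtype.val (LinearMap.congr_fun hab x)
    exact FiniteDimensional.of_injective Ψ hΨ

/-! ### The forward direction -/

lemma forward (M : RComod k Γ) (hQ : Quasifinite M) (S : RComod k Γ)
    (hS : IsSimpleComod S) : FiniteDimensional k ↥(comodIsotypicComponent M S) := by
  classical
  haveI := hS.1
  obtain ⟨x, hxne⟩ := exists_ne (0 : S.carrier)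
  obtain ⟨W, hWfd, hxW, hWsub⟩ := exists_fd_subcomodule S x
  have hWne : W ≠ ⊥ := fun h => hxne (by rw [h] at hxW; simpa using hxW)
  have hWtop : W = ⊤ := (hS.2 W hWsub).resolve_left hWne
  haveI : FiniteDimensional k S.carrier := by
    rw [hWtop] at hWfd
    exact Module.Finite.equiv (Submodule.topEquiv)
  haveI hH : FiniteDimensional k ↥(homSubmodule S M) := hQ S inferInstance
  set n := Module.finrank k ↥(homSubmodule S M) with hn
  set b := Module.finBasis k ↥(homSubmodule S M) with hbd
  set U : Submodule k M.carrier :=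
    ⨆ i : Fin n, LinearMap.range ((b i).1 : S.carrier →ₗ[k] M.carrier) with hUd
  haveI : FiniteDimensional k ↥U := by
    haveI : ∀ i : Fin n, FiniteDimensional k
        ↥(LinearMap.range ((b i).1 : S.carrier →ₗ[k] M.carrier)) := fun i => inferInstance
    infer_instance
  have hle : comodIsotypicComponent M S ≤ U := by
    apply sSup_le
    rintro p ⟨f, hfinj, rfl⟩
    rintro _ ⟨y, rfl⟩
    set h0 : ↥(homSubmodule S M) := ⟨f.toFun, f.comm⟩ with hh0
    have hrep := b.sum_repr h0
    have hval : f.toFun y = ∑ i, b.repr h0 i • ((b i).1 : S.carrier →ₗ[k] M.carrier) y := by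
      conv_lhs => rw [show f.toFun = (h0 : S.carrier →ₗ[k] M.carrier) from rfl, ← hrep]
      simp only [AddSubmonoidClass.coe_finset_sum, SetLike.val_smul, LinearMap.coe_sum,
        Finset.sum_apply, LinearMap.smul_apply]
    rw [hval]
    refine Submodule.sum_mem U fun i _ => Submodule.smul_mem U _ ?_
    exact le_iSup (fun i : Fin n =>
      LinearMap.range ((b i).1 : S.carrier →ₗ[k] M.carrier)) i
      (LinearMap.mem_range_self _ y)
  exact Submodule.finiteDimensional_of_le hle

/-! ### The backward direction -/

lemma hom_fd_of_sub (M F : RComod k Γ) (p : Submodule k F.carrier) (hp : IsSubcomodule F p)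
    (hA : FiniteDimensional k ↥(homSubmodule (subComod F p hp) M))
    (hQfd : FiniteDimensional k ↥(homSubmodule (quotComod F p hp) M)) :
    FiniteDimensional k ↥(homSubmodule F M) := by
  classical
  haveI := hA
  haveI := hQfd
  set A := subComod F p hp with hAd
  set Qc := quotComod F p hp with hQd
  have keyA := subCoact_prop F p hp
  have keyQ := quotCoact_prop F p hp
  have hmem : ∀ f : ↥(homSubmodule F M), (f.1 ∘ₗ p.subtype) ∈ homSubmodule A M := by
    intro f
    have hf : M.coact ∘ₗ f.1 = f.1.rTensor Γ ∘ₗ F.coact := f.2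
    show M.coact ∘ₗ (f.1 ∘ₗ p.subtype) = (f.1 ∘ₗ p.subtype).rTensor Γ ∘ₗ A.coact
    calc M.coact ∘ₗ (f.1 ∘ₗ p.subtype)
        = (M.coact ∘ₗ f.1) ∘ₗ p.subtype := by rw [LinearMap.comp_assoc]
      _ = (f.1.rTensor Γ ∘ₗ F.coact) ∘ₗ p.subtype := by rw [hf]
      _ = f.1.rTensor Γ ∘ₗ (F.coact ∘ₗ p.subtype) := by rw [LinearMap.comp_assoc]
      _ = f.1.rTensor Γ ∘ₗ (p.subtype.rTensor Γ ∘ₗ subCoact F p hp) := by rw [keyA]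
      _ = (f.1.rTensor Γ ∘ₗ p.subtype.rTensor Γ) ∘ₗ subCoact F p hp := by
          rw [LinearMap.comp_assoc]
      _ = (f.1 ∘ₗ p.subtype).rTensor Γ ∘ₗ subCoact F p hp := by rw [← LinearMap.rTensor_comp]
  set r : ↥(homSubmodule F M) →ₗ[k] ↥(homSubmodule A M) :=
    { toFun := fun f => ⟨f.1 ∘ₗ p.subtype, hmem f⟩
      map_add' := fun f g => Subtype.ext (by
        ext x; rfl)
      map_smul' := fun c f => Subtype.ext (by
        ext x; rfl) } with hrd
  haveI : FiniteDimensional k ↥(LinearMap.range r) :=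
    FiniteDimensional.finiteDimensional_submodule (LinearMap.range r)
  have hker : ∀ g : ↥(LinearMap.ker r), p ≤ LinearMap.ker (g.1.1) := by
    intro g x hx
    have h0 : g.1.1 ∘ₗ p.subtype = 0 := congrArg Subtype.val g.2
    simpa using LinearMap.congr_fun h0 ⟨x, hx⟩
  have hmemQ : ∀ g : ↥(LinearMap.ker r), (p.liftQ g.1.1 (hker g)) ∈ homSubmodule Qc M := by
    intro g
    show M.coact ∘ₗ (p.liftQ g.1.1 (hker g))
        = (p.liftQ g.1.1 (hker g)).rTensor Γ ∘ₗ Qc.coact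
    apply comp_cancel_right p.mkQ p.mkQ_surjective
    calc (M.coact ∘ₗ p.liftQ g.1.1 (hker g)) ∘ₗ p.mkQ
        = M.coact ∘ₗ (p.liftQ g.1.1 (hker g) ∘ₗ p.mkQ) := by rw [LinearMap.comp_assoc]
      _ = M.coact ∘ₗ g.1.1 := by rw [Submodule.liftQ_mkQ]
      _ = g.1.1.rTensor Γ ∘ₗ F.coact := g.1.2
      _ = ((p.liftQ g.1.1 (hker g)) ∘ₗ p.mkQ).rTensor Γ ∘ₗ F.coact := by
          rw [Submodule.liftQ_mkQ]
      _ = ((p.liftQ g.1.1 (hker g)).rTensor Γ ∘ₗ p.mkQ.rTensor Γ) ∘ₗ F.coact := by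
          rw [LinearMap.rTensor_comp]
      _ = (p.liftQ g.1.1 (hker g)).rTensor Γ ∘ₗ (p.mkQ.rTensor Γ ∘ₗ F.coact) := by
          rw [LinearMap.comp_assoc]
      _ = (p.liftQ g.1.1 (hker g)).rTensor Γ ∘ₗ (quotCoact F p hp ∘ₗ p.mkQ) := by rw [keyQ]
      _ = ((p.liftQ g.1.1 (hker g)).rTensor Γ ∘ₗ Qc.coact) ∘ₗ p.mkQ := by
          rfl
  set Λ : ↥(LinearMap.ker r) →ₗ[k] ↥(homSubmodule Qc M) :=
    { toFun := fun g => ⟨p.liftQ g.1.1 (hker g), hmemQ g⟩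
      map_add' := fun f g => Subtype.ext (Submodule.linearMap_qext p (by
        ext x
        simp
        rfl))
      map_smul' := fun c f => Subtype.ext (Submodule.linearMap_qext p (by
        ext x
        simp
        rfl)) } with hΛd
  have hΛ : Function.Injective Λ := by
    intro a b hab
    have h1 : p.liftQ a.1.1 (hker a) = p.liftQ b.1.1 (hker b) := congrArg Subtype.val hab
    have h2 : a.1.1 = b.1.1 := by
      have h3 := congrArg (fun L => L ∘ₗ p.mkQ) h1
      simpa only [Submodule.liftQ_mkQ] using h3
    exact Subtype.ext (Subtype.ext h2)
  haveI : FiniteDimensional k ↥(LinearMap.ker r) := FiniteDimensional.of_injective Λ hΛ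
  exact fd_of_ker_range r inferInstance inferInstance

lemma backward_aux (M : RComod k Γ)
    (hcomp : ∀ S : RComod k Γ, IsSimpleComod S →
      FiniteDimensional k ↥(comodIsotypicComponent M S)) :
    ∀ n : ℕ, ∀ F : RComod k Γ, FiniteDimensional k F.carrier →
      Module.finrank k F.carrier ≤ n → FiniteDimensional k ↥(homSubmodule F M) := by
  intro n
  induction n with
  | zero =>
    intro F hFfd hrk
    haveI := hFfd
    have hss : Subsingleton F.carrier := by
      have h0 : Module.finrank k F.carrier = 0 := Nat.le_zero.mp hrk
      exact Module.finrank_zero_iff.mp h0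
    exact hom_fd_of_subsingleton M F hss
  | succ n ih =>
    intro F hFfd hrk
    haveI := hFfd
    rcases subsingleton_or_nontrivial F.carrier with hss | hnt
    · exact hom_fd_of_subsingleton M F hss
    · obtain ⟨p, hp, hpne, hsimp⟩ := exists_simple_sub F hnt
      have hA : FiniteDimensional k ↥(homSubmodule (subComod F p hp) M) :=
        simpleHomFin M _ hsimp (hcomp _ hsimp)
      haveI : FiniteDimensional k (F.carrier ⧸ p) := inferInstance
      have hq : Module.finrank k (F.carrier ⧸ p) ≤ n := by
        have h1 := Submodule.finrank_quotient_add_finrank p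
        haveI : Nontrivial ↥p := Submodule.nontrivial_iff_ne_bot.mpr hpne
        have h2 : 0 < Module.finrank k ↥p := Module.finrank_pos
        omega
      have hQ := ih (quotComod F p hp)
        (inferInstanceAs (FiniteDimensional k (F.carrier ⧸ p))) hq
      exact hom_fd_of_sub M F p hp hA hQ

end QF

end Aux2



/-- A right `Γ`-comodule `M` is quasifinite (i.e. `Hom_Γ(F, M)` is
finite dimensional for every finite-dimensional comodule `F`) if and only if every
simple right `Γ`-comodule occurs with finite multiplicity in the socle of `M`,
i.e. every isotypic component of the socle is finite-dimensional. -/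
theorem quasifinite_iff_finite_socle_multiplicities (M : RComod k Γ) :
    Quasifinite M ↔
      ∀ S : RComod k Γ, IsSimpleComod S →
        FiniteDimensional k ↥(comodIsotypicComponent M S) := by
  constructor
  · intro hQ S hS
    exact QF.forward M hQ S hS
  · intro hcomp F hFfd
    exact QF.backward_aux M hcomp (Module.finrank k F.carrier) F hFfd le_rfl

end
end

section
/- Let Γ be a coalgebra over a field k and let 0 → A → B → C → 0 be an almost split sequence of right Γ-comodules with C finite-dimensional. Then for every finite-dimensional subcoalgebra Λ ⊆ Γ containing the coefficient space of C and a finite-dimensional subspace of B mapping onto C, the cotensored sequence (B □_Γ Λ) → (C □_Γ Λ) = C → 0 is a right almost split map in the category of right Λ-comodules. -/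
open TensorProduct LinearMap

noncomputable section

variable {k : Type u} [Field k]
variable {Γ : Type u} [AddCommGroup Γ] [Module k Γ] [Coalgebra k Γ]
variable {Λ : Type u} [AddCommGroup Λ] [Module k Λ] [Coalgebra k Λ]

/-- `ι : Λ → Γ` is a morphism of coalgebras. -/
def IsCoalgebraHom (ι : Λ →ₗ[k] Γ) : Prop :=
  Coalgebra.comul (R := k) (A := Γ) ∘ₗ ι
      = TensorProduct.map ι ι ∘ₗ Coalgebra.comul (R := k) (A := Λ)
    ∧ Coalgebra.counit (R := k) (A := Γ) ∘ₗ ι = Coalgebra.counit (R := k) (A := Λ)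


section Aux

variable {k : Type u} [Field k]
variable {Γ : Type u} [AddCommGroup Γ] [Module k Γ] [Coalgebra k Γ]
variable {Λ : Type u} [AddCommGroup Λ] [Module k Λ] [Coalgebra k Λ]

lemma tmap_injective {M N P Q : Type u} [AddCommGroup M] [Module k M] [AddCommGroup N] [Module k N]
    [AddCommGroup P] [Module k P] [AddCommGroup Q] [Module k Q]
    {f : M →ₗ[k] P} {g : N →ₗ[k] Q} (hf : Function.Injective f) (hg : Function.Injective g) :
    Function.Injective (TensorProduct.map f g) := by
  rw [← LinearMap.rTensor_comp_lTensor]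
  exact (Module.Flat.rTensor_preserves_injective_linearMap f hf).comp
    (Module.Flat.lTensor_preserves_injective_linearMap g hg)

/-- Pushforward of a `Λ`-comodule along a coalgebra morphism `ι : Λ → Γ`. -/
def RComod.pushforward (ι : Λ →ₗ[k] Γ) (hι : IsCoalgebraHom ι) (X : RComod k Λ) :
    RComod k Γ where
  carrier := X.carrier
  acg := X.acg
  mod := X.mod
  coact := LinearMap.lTensor X.carrier ι ∘ₗ X.coact
  coassoc := by
    ext x
    simp only [LinearMap.comp_apply, LinearEquiv.coe_coe]
    have h1 : (LinearMap.lTensor X.carrier ι ∘ₗ X.coact).rTensor Γ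
        ((ι.lTensor X.carrier) (X.coact x))
        = TensorProduct.map (LinearMap.lTensor X.carrier ι) ι
          ((X.coact.rTensor Λ) (X.coact x)) := by
      have := LinearMap.congr_fun
        (LinearMap.rTensor_comp_lTensor (R := k)
          (f := LinearMap.lTensor X.carrier ι ∘ₗ X.coact) (g := ι)) (X.coact x)
      simp only [LinearMap.comp_apply] at this
      rw [this]
      have : TensorProduct.map (LinearMap.lTensor X.carrier ι ∘ₗ X.coact) ι
          = TensorProduct.map (LinearMap.lTensor X.carrier ι) ι ∘ₗ X.coact.rTensor Λ := by
        rw [LinearMap.rTensor, ← TensorProduct.map_comp, LinearMap.comp_id]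
      rw [this, LinearMap.comp_apply]
    rw [h1]
    have h2 : (TensorProduct.assoc k X.carrier Γ Γ)
        (TensorProduct.map (LinearMap.lTensor X.carrier ι) ι
          ((X.coact.rTensor Λ) (X.coact x)))
        = LinearMap.lTensor X.carrier (TensorProduct.map ι ι)
          ((TensorProduct.assoc k X.carrier Λ Λ) ((X.coact.rTensor Λ) (X.coact x))) := by
      have := TensorProduct.map_map_assoc (R := k) LinearMap.id ι ι
        ((X.coact.rTensor Λ) (X.coact x))
      rw [LinearMap.lTensor, LinearMap.lTensor, ← this]
    rw [h2]
    have h3 : (TensorProduct.assoc k X.carrier Λ Λ) ((X.coact.rTensor Λ) (X.coact x))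
        = (Coalgebra.comul (R := k) (A := Λ)).lTensor X.carrier (X.coact x) := by
      have := LinearMap.congr_fun X.coassoc x
      simpa only [LinearMap.comp_apply, LinearEquiv.coe_coe] using this
    rw [h3]
    have h4 : LinearMap.lTensor X.carrier (TensorProduct.map ι ι) ∘ₗ
        (Coalgebra.comul (R := k) (A := Λ)).lTensor X.carrier
        = (Coalgebra.comul (R := k) (A := Γ)).lTensor X.carrier ∘ₗ
          LinearMap.lTensor X.carrier ι := by
      rw [← LinearMap.lTensor_comp, ← LinearMap.lTensor_comp, ← hι.1]
    exact LinearMap.congr_fun h4 (X.coact x)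
  counit_id := by
    have h : (Coalgebra.counit (R := k) (A := Γ)).lTensor X.carrier ∘ₗ
        (LinearMap.lTensor X.carrier ι ∘ₗ X.coact)
        = (Coalgebra.counit (R := k) (A := Λ)).lTensor X.carrier ∘ₗ X.coact := by
      rw [← LinearMap.comp_assoc, ← LinearMap.lTensor_comp, hι.2]
    rw [h]
    exact X.counit_id

end Aux

/-- Let `0 → A → B → C → 0` be an almost split sequence of right
`Γ`-comodules with `C` finite-dimensional, and let `Λ` be a finite-dimensional
subcoalgebra of `Γ` (a coalgebra with an injective coalgebra morphism `ι : Λ → Γ`)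
containing the coefficient space of `C` (so `C □_Γ Λ = C`: the identification is the
bijective map `jC`) and a finite-dimensional subspace of `B` mapping onto `C` (the
hypothesis `W`).  Here `BΛ` is the `Λ`-comodule `B □_Γ Λ` (identified by `jB` with the
largest subspace of `B` whose coaction lands in `B ⊗ Λ`), and `gΛ : B □_Γ Λ → C □_Γ Λ = C`
is the restriction of `g`.  Then `gΛ` is a surjective right almost split map in the
category of right `Λ`-comodules. -/
theorem cotensored_almost_split_is_right_almost_split
    (ι : Λ →ₗ[k] Γ) (hιinj : Function.Injective ι) (hι : IsCoalgebraHom ι)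
    [FiniteDimensional k Λ]
    (A B C : RComod k Γ) (f : RComodHom A B) (g : RComodHom B C)
    (halm : IsAlmostSplit f g) (hCfd : FiniteDimensional k C.carrier)
    -- `BΛ = B □_Γ Λ`:
    (BΛ : RComod k Λ) (jB : BΛ.carrier →ₗ[k] B.carrier)
    (hjBinj : Function.Injective jB)
    (hjBrange : LinearMap.range jB
      = Submodule.comap B.coact (LinearMap.range (LinearMap.lTensor B.carrier ι)))
    (hjBcomm : B.coact ∘ₗ jB = TensorProduct.map jB ι ∘ₗ BΛ.coact)
    -- `CΛ = C □_Γ Λ = C` (since `Λ` contains the coefficient space of `C`):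
    (CΛ : RComod k Λ) (jC : CΛ.carrier →ₗ[k] C.carrier)
    (hjCbij : Function.Bijective jC)
    (hjCcomm : C.coact ∘ₗ jC = TensorProduct.map jC ι ∘ₗ CΛ.coact)
    -- a finite-dimensional subspace of `B` contained in `B □_Γ Λ` and mapping onto `C`:
    (W : Submodule k B.carrier) (hWfd : FiniteDimensional k ↥W)
    (hWΛ : ∀ b ∈ W, B.coact b ∈ LinearMap.range (LinearMap.lTensor B.carrier ι))
    (hWsurj : ∀ c : C.carrier, ∃ b ∈ W, g.toFun b = c)
    -- the restriction `gΛ` of `g`: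
    (gΛ : RComodHom BΛ CΛ) (hgΛ : jC ∘ₗ gΛ.toFun = g.toFun ∘ₗ jB) :
    Function.Surjective gΛ.toFun
      ∧ ¬ IsSplitEpi gΛ
      ∧ ∀ (X : RComod k Λ) (u : RComodHom X CΛ), ¬ IsSplitEpi u →
          ∃ h : RComodHom X BΛ, gΛ.comp h = u := by
  classical
  have hmapinj : Function.Injective (TensorProduct.map jB ι) := tmap_injective hjBinj hιinj
  -- Surjectivity
  have hsurj : Function.Surjective gΛ.toFun := by
    intro c'
    obtain ⟨b, hbW, hbg⟩ := hWsurj (jC c')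
    have hbmem : b ∈ LinearMap.range jB := by
      rw [hjBrange]; exact hWΛ b hbW
    obtain ⟨b', rfl⟩ := hbmem
    refine ⟨b', hjCbij.1 ?_⟩
    have h := LinearMap.congr_fun hgΛ b'
    simp only [LinearMap.comp_apply] at h
    rw [h, hbg]
  have heC : ∀ c', (LinearEquiv.ofBijective jC hjCbij).symm (jC c') = c' := fun c' => by
    have : jC c' = (LinearEquiv.ofBijective jC hjCbij) c' := rfl
    rw [this, LinearEquiv.symm_apply_apply]
  have heC2 : ∀ c, jC ((LinearEquiv.ofBijective jC hjCbij).symm c) = c := fun c => by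
    have : jC ((LinearEquiv.ofBijective jC hjCbij).symm c)
        = (LinearEquiv.ofBijective jC hjCbij) ((LinearEquiv.ofBijective jC hjCbij).symm c) := rfl
    rw [this, LinearEquiv.apply_symm_apply]
  -- Nonsplitness
  have hnonsplit : ¬ IsSplitEpi gΛ := by
    rintro ⟨s, hs⟩
    apply halm.nonsplit
    have hs' : gΛ.toFun ∘ₗ s.toFun = LinearMap.id := congrArg RComodHom.toFun hs
    set eCs : C.carrier →ₗ[k] CΛ.carrier :=
      (LinearEquiv.ofBijective jC hjCbij).symm.toLinearMap with heCs
    refine ⟨⟨jB ∘ₗ s.toFun ∘ₗ eCs, ?_⟩, ?_⟩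
    · apply LinearMap.ext; intro c
      obtain ⟨c', rfl⟩ := hjCbij.2 c
      simp only [LinearMap.comp_apply, heCs, LinearEquiv.coe_coe, heC]
      have e1 := LinearMap.congr_fun hjBcomm (s.toFun c')
      have e2 := LinearMap.congr_fun s.comm c'
      have e3 := LinearMap.congr_fun hjCcomm c'
      simp only [LinearMap.comp_apply] at e1 e2 e3
      rw [e1, e2, e3]
      have e4 := LinearMap.congr_fun
        (LinearMap.map_comp_rTensor (f := jB) (g := ι) (f' := s.toFun)) (CΛ.coact c')
      have e5 := LinearMap.congr_fun
        (LinearMap.rTensor_comp_map (f' := jB ∘ₗ s.toFun ∘ₗ eCs) (f := jC) (g := ι))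
        (CΛ.coact c')
      simp only [LinearMap.comp_apply] at e4 e5
      rw [e4, e5]
      have e6 : (jB ∘ₗ s.toFun ∘ₗ eCs) ∘ₗ jC = jB ∘ₗ s.toFun := by
        apply LinearMap.ext; intro x
        simp only [LinearMap.comp_apply, heCs, LinearEquiv.coe_coe]
        rw [heC]
      rw [e6]
    · apply RComodHom.ext
      apply LinearMap.ext; intro c
      show g.toFun (jB (s.toFun (eCs c))) = c
      have h := LinearMap.congr_fun hgΛ (s.toFun (eCs c))
      simp only [LinearMap.comp_apply] at h
      rw [← h]
      have h2 := LinearMap.congr_fun hs' (eCs c)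
      simp only [LinearMap.comp_apply, LinearMap.id_apply] at h2
      rw [h2]
      exact heC2 c
  refine ⟨hsurj, hnonsplit, ?_⟩
  -- the lifting property
  intro X u hu
  set X' : RComod k Γ := RComod.pushforward ι hι X with hX'
  -- the induced Γ-comodule map u' : X' → C
  have hucoe : C.coact ∘ₗ (jC ∘ₗ u.toFun)
      = (jC ∘ₗ u.toFun).rTensor Γ ∘ₗ (LinearMap.lTensor X.carrier ι ∘ₗ X.coact) := by
    apply LinearMap.ext; intro x
    simp only [LinearMap.comp_apply]
    have e1 := LinearMap.congr_fun hjCcomm (u.toFun x)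
    have e2 := LinearMap.congr_fun u.comm x
    simp only [LinearMap.comp_apply] at e1 e2
    rw [e1, e2]
    have e3 := LinearMap.congr_fun
      (LinearMap.map_comp_rTensor (f := jC) (g := ι) (f' := u.toFun)) (X.coact x)
    have e4 := LinearMap.congr_fun
      (LinearMap.rTensor_comp_lTensor (f := jC ∘ₗ u.toFun) (g := ι)) (X.coact x)
    simp only [LinearMap.comp_apply] at e3 e4
    rw [e3, e4]
  have hu'comm : C.coact ∘ₗ (jC ∘ₗ u.toFun) = (jC ∘ₗ u.toFun).rTensor Γ ∘ₗ X'.coact := hucoe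
  set u' : RComodHom X' C := ⟨jC ∘ₗ u.toFun, hu'comm⟩ with hu'def
  have hu'nsplit : ¬ IsSplitEpi u' := by
    rintro ⟨t, ht⟩
    apply hu
    set tf : C.carrier →ₗ[k] X.carrier := t.toFun with htf
    have ht' : (jC ∘ₗ u.toFun) ∘ₗ tf = LinearMap.id := congrArg RComodHom.toFun ht
    have tc : (LinearMap.lTensor X.carrier ι ∘ₗ X.coact) ∘ₗ tf
        = tf.rTensor Γ ∘ₗ C.coact := t.comm
    have hlinj : Function.Injective (LinearMap.lTensor X.carrier ι) :=
      Module.Flat.lTensor_preserves_injective_linearMap (M := X.carrier) ι hιinj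
    refine ⟨⟨tf ∘ₗ jC, ?_⟩, ?_⟩
    · apply LinearMap.ext; intro c'
      apply hlinj
      show (LinearMap.lTensor X.carrier ι) (X.coact ((tf ∘ₗ jC) c'))
        = (LinearMap.lTensor X.carrier ι) (((tf ∘ₗ jC).rTensor Λ) (CΛ.coact c'))
      have e1 := LinearMap.congr_fun tc (jC c')
      simp only [LinearMap.comp_apply] at e1 ⊢
      rw [e1]
      have e2 := LinearMap.congr_fun hjCcomm c'
      simp only [LinearMap.comp_apply] at e2
      rw [e2]
      have e3 := LinearMap.congr_fun
        (LinearMap.rTensor_comp_map (f' := tf) (f := jC) (g := ι)) (CΛ.coact c')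
      have e4 := LinearMap.congr_fun
        (LinearMap.lTensor_comp_rTensor (f := tf ∘ₗ jC) (g := ι)) (CΛ.coact c')
      simp only [LinearMap.comp_apply] at e3 e4
      rw [e3, e4]
    · apply RComodHom.ext
      apply LinearMap.ext; intro c'
      show u.toFun (tf (jC c')) = c'
      apply hjCbij.1
      have h2 := LinearMap.congr_fun ht' (jC c')
      simp only [LinearMap.comp_apply, LinearMap.id_apply] at h2
      exact h2
  obtain ⟨h', hgh'⟩ := halm.lift X' u' hu'nsplit
  set h'f : X.carrier →ₗ[k] B.carrier := h'.toFun with hh'f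
  have hgh'' : g.toFun ∘ₗ h'f = jC ∘ₗ u.toFun := congrArg RComodHom.toFun hgh'
  have h'c : B.coact ∘ₗ h'f
      = h'f.rTensor Γ ∘ₗ (LinearMap.lTensor X.carrier ι ∘ₗ X.coact) := h'.comm
  -- the image of h' lies in B □ Λ
  have hmem : ∀ x : X.carrier, h'f x ∈ LinearMap.range jB := by
    intro x
    rw [hjBrange]
    have e1 := LinearMap.congr_fun h'c x
    simp only [LinearMap.comp_apply] at e1
    have e2 := LinearMap.congr_fun
      (LinearMap.rTensor_comp_lTensor (f := h'f) (g := ι)) (X.coact x)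
    have e3 := LinearMap.congr_fun
      (LinearMap.lTensor_comp_rTensor (f := h'f) (g := ι)) (X.coact x)
    simp only [LinearMap.comp_apply] at e2 e3
    simp only [Submodule.mem_comap]
    rw [e1, e2, ← e3]
    exact ⟨(h'f.rTensor Λ) (X.coact x), rfl⟩
  set eB := LinearEquiv.ofInjective jB hjBinj with heB
  set h₀ : X.carrier →ₗ[k] BΛ.carrier :=
    eB.symm.toLinearMap ∘ₗ LinearMap.codRestrict (LinearMap.range jB) h'f hmem with hh₀
  have hjBh₀ : ∀ x, jB (h₀ x) = h'f x := by
    intro x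
    show jB (eB.symm ((LinearMap.codRestrict (LinearMap.range jB) h'f hmem) x)) = h'f x
    rw [heB, LinearEquiv.ofInjective_symm_apply]
    rfl
  have hcomm₀ : BΛ.coact ∘ₗ h₀ = h₀.rTensor Λ ∘ₗ X.coact := by
    apply LinearMap.ext; intro x
    apply hmapinj
    have e0 := LinearMap.congr_fun hjBcomm (h₀ x)
    simp only [LinearMap.comp_apply] at e0 ⊢
    rw [← e0, hjBh₀]
    have e1 := LinearMap.congr_fun h'c x
    simp only [LinearMap.comp_apply] at e1
    rw [e1]
    have e2 := LinearMap.congr_fun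
      (LinearMap.rTensor_comp_lTensor (f := h'f) (g := ι)) (X.coact x)
    simp only [LinearMap.comp_apply] at e2
    rw [e2]
    have e3 : TensorProduct.map jB ι ∘ₗ h₀.rTensor Λ = TensorProduct.map h'f ι := by
      rw [LinearMap.map_comp_rTensor]
      congr 1
      apply LinearMap.ext; intro y
      simp only [LinearMap.comp_apply]
      exact hjBh₀ y
    have e4 := LinearMap.congr_fun e3 (X.coact x)
    simp only [LinearMap.comp_apply] at e4
    rw [e4]
  refine ⟨⟨h₀, hcomm₀⟩, ?_⟩
  apply RComodHom.ext
  apply LinearMap.ext; intro x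
  show gΛ.toFun (h₀ x) = u.toFun x
  apply hjCbij.1
  have e1 := LinearMap.congr_fun hgΛ (h₀ x)
  have e2 := LinearMap.congr_fun hgh'' x
  simp only [LinearMap.comp_apply] at e1 e2
  rw [e1, hjBh₀, e2]

end
end

section
/- Let Q be the quiver with one vertex and one loop over a field k, and Γ = kQ its path coalgebra (isomorphic to the divided power coalgebra). For each n ≥ 1 let V_n be the unique n-dimensional indecomposable right Γ-comodule. There are almost split sequences d_n : 0 → V_n → V_{n-1} ⊕ V_{n+1} → V_n → 0, but the direct limit over n of the sequences d_n (with the canonical connecting maps) is a split short exact sequence 0 → V → V ⊕ V → V → 0 where V = lim V_n ≅ kQ; in particular the direct limit of almost split sequences need not be almost split. -/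
open TensorProduct LinearMap

noncomputable section

variable {k : Type u} [Field k]
variable {Γ : Type u} [AddCommGroup Γ] [Module k Γ] [Coalgebra k Γ]

/-- The regular right comodule `Γ` (coaction = comultiplication). -/
def regComod (k : Type u) [Field k] (Γ : Type u)
    [AddCommGroup Γ] [Module k Γ] [Coalgebra k Γ] : RComod k Γ where
  carrier := Γ
  coact := Coalgebra.comul
  coassoc := Coalgebra.coassoc
  counit_id := by ext x; simp

/-- `Γ` is the path coalgebra of the one-loop quiver, i.e. the divided power coalgebra:
basis `(x^n)_{n ∈ ℕ}` with `Δ(x^n) = Σ_{i+j=n} x^i ⊗ x^j` and `ε(x^n) = δ_{n,0}`. -/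
def IsDividedPowerCoalgebra (bΓ : Module.Basis ℕ k Γ) : Prop :=
  (∀ n : ℕ, Coalgebra.comul (R := k) (bΓ n)
      = ∑ m ∈ Finset.range (n + 1), bΓ m ⊗ₜ[k] bΓ (n - m))
    ∧ (∀ n : ℕ, Coalgebra.counit (R := k) (bΓ n) = if n = 0 then (1 : k) else 0)

/-- `V` is the `n`-dimensional indecomposable comodule `V_n` (the `k`-space with a
single nilpotent Jordan block): basis `(v_t)_{t < n}` with coaction
`ρ(v_t) = Σ_m v_{t+m} ⊗ x^m`. -/
def IsJordanComod (bΓ : Module.Basis ℕ k Γ) (n : ℕ)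
    (V : RComod k Γ) (bV : Module.Basis (Fin n) k V.carrier) : Prop :=
  ∀ t : Fin n,
    V.coact (bV t)
      = ∑ m ∈ (Finset.range (n - t.1)).attach,
          bV ⟨t.1 + m.1, by have h1 := Finset.mem_range.mp m.2; have h2 := t.2; omega⟩
            ⊗ₜ[k] bΓ m.1


namespace ARLimit
set_option linter.unusedSectionVars false

variable {k : Type u} [Field k]
variable {Γ : Type u} [AddCommGroup Γ] [Module k Γ] [Coalgebra k Γ]

/-- The coordinate functional on `Γ` attached to the basis element `x^m`. -/
def pr (bΓ : Module.Basis ℕ k Γ) (m : ℕ) : Γ →ₗ[k] k := bΓ.coord m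

lemma pr_apply (bΓ : Module.Basis ℕ k Γ) (m l : ℕ) :
    pr bΓ m (bΓ l) = if l = m then 1 else 0 := by
  simp [pr, Module.Basis.coord_apply, Module.Basis.repr_self, Finsupp.single_apply]

/-- The `m`-th "shift" operator of a comodule. -/
def E (bΓ : Module.Basis ℕ k Γ) (M : RComod k Γ) (m : ℕ) : M.carrier →ₗ[k] M.carrier :=
  (TensorProduct.rid k M.carrier).toLinearMap ∘ₗ (pr bΓ m).lTensor M.carrier ∘ₗ M.coact

variable (bΓ : Module.Basis ℕ k Γ)

lemma rid_pr_swap {M N : Type u} [AddCommGroup M] [Module k M] [AddCommGroup N] [Module k N]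
    (f : M →ₗ[k] N) (m : ℕ) :
    (TensorProduct.rid k N).toLinearMap ∘ₗ (pr bΓ m).lTensor N ∘ₗ f.rTensor Γ
      = f ∘ₗ (TensorProduct.rid k M).toLinearMap ∘ₗ (pr bΓ m).lTensor M := by
  apply TensorProduct.ext'
  intro x γ
  simp

lemma E_comm {M N : RComod k Γ} (f : M.carrier →ₗ[k] N.carrier)
    (hf : N.coact ∘ₗ f = f.rTensor Γ ∘ₗ M.coact) (m : ℕ) :
    E bΓ N m ∘ₗ f = f ∘ₗ E bΓ M m := by
  ext x
  have h1 := LinearMap.congr_fun hf x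
  have h2 := LinearMap.congr_fun (rid_pr_swap bΓ f m) (M.coact x)
  simp only [LinearMap.comp_apply] at h1 h2 ⊢
  simp only [E, LinearMap.comp_apply, h1, h2]

lemma tensor_ext {M : Type u} [AddCommGroup M] [Module k M] {z w : M ⊗[k] Γ}
    (h : ∀ m, (TensorProduct.rid k M) ((pr bΓ m).lTensor M z)
      = (TensorProduct.rid k M) ((pr bΓ m).lTensor M w)) : z = w := by
  have key : ∀ (z : M ⊗[k] Γ) (m : ℕ),
      (TensorProduct.finsuppScalarRight k k M ℕ)
        ((TensorProduct.congr (LinearEquiv.refl k M) bΓ.repr) z) m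
      = (TensorProduct.rid k M) ((pr bΓ m).lTensor M z) := by
    intro z m
    rw [TensorProduct.finsuppScalarRight_apply]
    congr 1
    have : (Finsupp.lapply m).lTensor M ∘ₗ
        (TensorProduct.congr (LinearEquiv.refl k M) bΓ.repr).toLinearMap
        = (pr bΓ m).lTensor M := by
      apply TensorProduct.ext'
      intro x γ
      simp [pr, TensorProduct.congr, Module.Basis.coord_apply]
    exact LinearMap.congr_fun this z
  have : (TensorProduct.finsuppScalarRight k k M ℕ)
        ((TensorProduct.congr (LinearEquiv.refl k M) bΓ.repr) z)
      = (TensorProduct.finsuppScalarRight k k M ℕ)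
        ((TensorProduct.congr (LinearEquiv.refl k M) bΓ.repr) w) := by
    ext m
    rw [key, key]; exact h m
  exact (TensorProduct.congr (LinearEquiv.refl k M) bΓ.repr).injective
    ((TensorProduct.finsuppScalarRight k k M ℕ).injective this)

lemma comm_of_E_comm {M N : RComod k Γ} (f : M.carrier →ₗ[k] N.carrier)
    (h : ∀ m, E bΓ N m ∘ₗ f = f ∘ₗ E bΓ M m) :
    N.coact ∘ₗ f = f.rTensor Γ ∘ₗ M.coact := by
  ext x
  simp only [LinearMap.comp_apply]
  apply tensor_ext bΓ
  intro m
  have h1 := LinearMap.congr_fun (h m) x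
  have h2 := LinearMap.congr_fun (rid_pr_swap bΓ f m) (M.coact x)
  simp only [LinearMap.comp_apply, E] at h1 h2 ⊢
  exact h1.trans h2.symm


set_option linter.unusedSectionVars false

lemma counit_eq (hΓ : IsDividedPowerCoalgebra bΓ) :
    (Coalgebra.counit (R := k) (A := Γ)) = pr bΓ 0 := by
  apply bΓ.ext
  intro n
  rw [hΓ.2 n, pr_apply]

lemma E_zero (hΓ : IsDividedPowerCoalgebra bΓ) (M : RComod k Γ) :
    E bΓ M 0 = LinearMap.id := by
  unfold E
  rw [← counit_eq bΓ hΓ]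
  exact M.counit_id

lemma pr_conv (hΓ : IsDividedPowerCoalgebra bΓ) (i j : ℕ) :
    (LinearMap.mul' k k ∘ₗ TensorProduct.map (pr bΓ i) (pr bΓ j))
        ∘ₗ (Coalgebra.comul (R := k) (A := Γ))
      = pr bΓ (i + j) := by
  apply bΓ.ext
  intro n
  simp only [LinearMap.comp_apply]
  rw [hΓ.1 n, pr_apply]
  simp only [map_sum, TensorProduct.map_tmul, LinearMap.mul'_apply, pr_apply]
  by_cases h : n = i + j
  · subst h
    rw [Finset.sum_eq_single i]
    · simp
    · intro m hm hmi
      simp only [Finset.mem_range] at hm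
      by_cases h2 : (i + j) - m = j
      · have : m ≠ i ∨ (i+j) - m ≠ j := by omega
        rcases this with h3 | h3
        · simp [h3]
        · exact absurd h2 h3
      · simp [h2]
    · intro hi
      exact absurd (Finset.mem_range.mpr (by omega)) hi
  · rw [if_neg h]
    apply Finset.sum_eq_zero
    intro m hm
    simp only [Finset.mem_range] at hm
    by_cases h1 : m = i
    · subst h1
      have : n - m ≠ j := by omega
      simp [this]
    · simp [h1]

lemma E_add (hΓ : IsDividedPowerCoalgebra bΓ) (M : RComod k Γ) (i j : ℕ) :
    E bΓ M i ∘ₗ E bΓ M j = E bΓ M (i + j) := by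
  set Mc := M.carrier with hMc
  set c := M.coact with hc
  set μ : Γ ⊗[k] Γ →ₗ[k] k :=
    LinearMap.mul' k k ∘ₗ TensorProduct.map (pr bΓ i) (pr bΓ j) with hμ
  have hstepD : (TensorProduct.rid k Mc).toLinearMap ∘ₗ μ.lTensor Mc
        ∘ₗ (TensorProduct.assoc k Mc Γ Γ).toLinearMap
      = ((TensorProduct.rid k Mc).toLinearMap ∘ₗ (pr bΓ j).lTensor Mc)
        ∘ₗ ((TensorProduct.rid k Mc).toLinearMap ∘ₗ (pr bΓ i).lTensor Mc).rTensor Γ := by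
    apply TensorProduct.ext_threefold
    intro x γ δ
    simp [μ, TensorProduct.smul_tmul', smul_smul, mul_comm]
  have h1 : E bΓ M (i + j)
      = (TensorProduct.rid k Mc).toLinearMap ∘ₗ μ.lTensor Mc
          ∘ₗ ((Coalgebra.comul (R := k) (A := Γ)).lTensor Mc ∘ₗ c) := by
    unfold E
    rw [← pr_conv bΓ hΓ i j, LinearMap.lTensor_comp]
    simp only [LinearMap.comp_assoc]
    rfl
  rw [h1, ← M.coassoc]
  have h2 : (TensorProduct.rid k Mc).toLinearMap ∘ₗ μ.lTensor Mc
        ∘ₗ ((TensorProduct.assoc k Mc Γ Γ).toLinearMap ∘ₗ c.rTensor Γ ∘ₗ c)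
      = (((TensorProduct.rid k Mc).toLinearMap ∘ₗ (pr bΓ j).lTensor Mc)
          ∘ₗ (((TensorProduct.rid k Mc).toLinearMap ∘ₗ (pr bΓ i).lTensor Mc) ∘ₗ c).rTensor Γ)
          ∘ₗ c := by
    simp only [← LinearMap.comp_assoc, LinearMap.rTensor_comp] at hstepD ⊢
    rw [hstepD]
  rw [h2]
  have h3 : ((TensorProduct.rid k Mc).toLinearMap ∘ₗ (pr bΓ i).lTensor Mc) ∘ₗ c
      = E bΓ M i := by
    unfold E
    simp only [LinearMap.comp_assoc]
    rfl
  rw [h3]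
  have h4 : ((TensorProduct.rid k Mc).toLinearMap ∘ₗ (pr bΓ j).lTensor Mc)
        ∘ₗ (E bΓ M i).rTensor Γ
      = E bΓ M i ∘ₗ ((TensorProduct.rid k Mc).toLinearMap ∘ₗ (pr bΓ j).lTensor Mc) := by
    have := rid_pr_swap bΓ (E bΓ M i) j
    simp only [← LinearMap.comp_assoc] at this ⊢
    exact this
  rw [h4]
  simp only [LinearMap.comp_assoc]
  rfl

lemma E_E (hΓ : IsDividedPowerCoalgebra bΓ) (M : RComod k Γ) (i j : ℕ) (x : M.carrier) :
    E bΓ M i (E bΓ M j x) = E bΓ M (i + j) x :=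
  LinearMap.congr_fun (E_add bΓ hΓ M i j) x


section Jordan

variable (hΓ : IsDividedPowerCoalgebra bΓ)
variable {N : ℕ} {V : RComod k Γ} (bV : Module.Basis (Fin N) k V.carrier)

/-- `ℕ`-indexed version of the basis of a Jordan comodule, zero out of range. -/
def BV (j : ℕ) : V.carrier := if h : j < N then bV ⟨j, h⟩ else 0

lemma coact_jordan (hV : IsJordanComod bΓ N V bV) (t : Fin N) :
    V.coact (bV t) = ∑ m' ∈ Finset.range (N - t.1), BV bV (t.1 + m') ⊗ₜ[k] bΓ m' := by
  rw [hV t, ← Finset.sum_attach (Finset.range (N - t.1))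
    (fun m' => BV bV (t.1 + m') ⊗ₜ[k] bΓ m')]
  apply Finset.sum_congr rfl
  intro m' _
  have h' : t.1 + m'.1 < N := by
    have := Finset.mem_range.mp m'.2; have := t.2; omega
  rw [BV, dif_pos h']

lemma BV_lt (t : Fin N) : BV bV t.1 = bV t := dif_pos t.2

lemma E_BV (hV : IsJordanComod bΓ N V bV) (m j : ℕ) :
    E bΓ V m (BV bV j) = BV bV (j + m) := by
  by_cases hj : j < N
  · have hBj : BV bV j = bV ⟨j, hj⟩ := dif_pos hj
    rw [hBj]
    unfold E
    simp only [LinearMap.comp_apply]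
    rw [coact_jordan bΓ bV hV ⟨j, hj⟩, map_sum, map_sum]
    simp only [LinearMap.lTensor_tmul, pr_apply, TensorProduct.tmul_ite, apply_ite, map_zero,
      TensorProduct.rid_tmul, one_smul, zero_smul, LinearEquiv.coe_coe]
    rw [Finset.sum_ite_eq' (Finset.range (N - j)) m (fun m' => BV bV (j + m'))]
    by_cases h : m < N - j
    · rw [if_pos (Finset.mem_range.mpr h)]
    · rw [if_neg (fun hc => h (Finset.mem_range.mp hc))]
      rw [BV, dif_neg (by omega)]
  · rw [BV, dif_neg hj, map_zero, BV, dif_neg (by omega)]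

lemma E_jordan_zero (hV : IsJordanComod bΓ N V bV) (m : ℕ) (hm : N ≤ m) :
    E bΓ V m = 0 := by
  apply bV.ext
  intro t
  rw [← BV_lt bV t, E_BV bΓ bV hV, BV, dif_neg (by omega), LinearMap.zero_apply]

lemma coord_BV (s : Fin N) (j : ℕ) :
    bV.coord s (BV bV j) = if j = s.1 then 1 else 0 := by
  by_cases hj : j < N
  · rw [BV, dif_pos hj]
    simp only [Module.Basis.coord_apply, Module.Basis.repr_self, Finsupp.single_apply]
    by_cases h : j = s.1
    · rw [if_pos (by exact Fin.eq_of_val_eq h), if_pos h]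
    · rw [if_neg (fun hc => h (by exact congrArg Fin.val hc)), if_neg h]
  · rw [BV, dif_neg hj, map_zero, if_neg (by omega)]

/-- The comodule morphism `X → V` attached to a functional `ψ` with `ψ ∘ E_N = 0`. -/
def uFun (X : RComod k Γ) (ψ : X.carrier →ₗ[k] k) : X.carrier →ₗ[k] V.carrier :=
  ∑ t ∈ Finset.range N, (ψ ∘ₗ E bΓ X (N - 1 - t)).smulRight (BV bV t)

lemma uFun_apply (X : RComod k Γ) (ψ : X.carrier →ₗ[k] k) (x : X.carrier) :
    uFun bΓ bV X ψ x = ∑ t ∈ Finset.range N, ψ (E bΓ X (N - 1 - t) x) • BV bV t := by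
  simp [uFun]

lemma psi_zero (hΓ : IsDividedPowerCoalgebra bΓ) {X : RComod k Γ}
    (ψ : X.carrier →ₗ[k] k) (hψ : ψ ∘ₗ E bΓ X N = 0)
    (j : ℕ) (hj : N ≤ j) : ψ ∘ₗ E bΓ X j = 0 := by
  have : E bΓ X j = E bΓ X N ∘ₗ E bΓ X (j - N) := by
    rw [E_add bΓ hΓ X N (j - N)]
    congr 1
    omega
  rw [this, ← LinearMap.comp_assoc, hψ, LinearMap.zero_comp]

lemma uFun_E_comm (hΓ : IsDividedPowerCoalgebra bΓ) (hV : IsJordanComod bΓ N V bV)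
    (X : RComod k Γ)
    (ψ : X.carrier →ₗ[k] k) (hψ : ψ ∘ₗ E bΓ X N = 0) (m : ℕ) :
    E bΓ V m ∘ₗ uFun bΓ bV X ψ = uFun bΓ bV X ψ ∘ₗ E bΓ X m := by
  set F : ℕ → (X.carrier →ₗ[k] V.carrier) :=
    fun s => (ψ ∘ₗ E bΓ X (N - 1 - s + m)).smulRight (BV bV s) with hF
  have hF0 : ∀ s, N ≤ s → F s = 0 := by
    intro s hs
    simp only [hF, BV, dif_neg (by omega : ¬ s < N)]
    ext x; simp
  have hFsmall : ∀ s, s < m → F s = 0 := by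
    intro s hs
    have : ψ ∘ₗ E bΓ X (N - 1 - s + m) = 0 := psi_zero bΓ hΓ ψ hψ _ (by omega)
    simp only [hF, this]
    ext x; simp
  have lhs_eq : E bΓ V m ∘ₗ uFun bΓ bV X ψ = ∑ t ∈ Finset.range N, F (t + m) := by
    ext x
    rw [LinearMap.comp_apply, uFun_apply, map_sum, LinearMap.sum_apply]
    apply Finset.sum_congr rfl
    intro t ht
    rw [map_smul, E_BV bΓ bV hV]
    simp only [hF, LinearMap.smulRight_apply, LinearMap.comp_apply]
    by_cases h : t + m < N
    · have he : N - 1 - (t + m) + m = N - 1 - t := by omega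
      rw [he]
    · rw [BV, dif_neg h, smul_zero, smul_zero]
  have rhs_eq : uFun bΓ bV X ψ ∘ₗ E bΓ X m = ∑ s ∈ Finset.range N, F s := by
    ext x
    rw [LinearMap.comp_apply, uFun_apply, LinearMap.sum_apply]
    apply Finset.sum_congr rfl
    intro t ht
    simp only [hF, LinearMap.smulRight_apply, LinearMap.comp_apply]
    rw [E_E bΓ hΓ]
  rw [lhs_eq, rhs_eq]
  have shift : ∑ t ∈ Finset.range N, F (t + m) = ∑ s ∈ Finset.Ico m (N + m), F s := by
    rw [Finset.sum_Ico_eq_sum_range]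
    have h2 : N + m - m = N := by omega
    rw [h2]
    apply Finset.sum_congr rfl
    intro t ht
    congr 1
    omega
  have left_ext : ∑ s ∈ Finset.Ico m (N + m), F s = ∑ s ∈ Finset.range (N + m), F s := by
    rw [Finset.range_eq_Ico,
      ← Finset.sum_Ico_consecutive F (Nat.zero_le m) (by omega : m ≤ N + m)]
    have h0 : ∑ s ∈ Finset.Ico 0 m, F s = 0 :=
      Finset.sum_eq_zero (fun s hs => hFsmall s (Finset.mem_Ico.mp hs).2)
    rw [h0, zero_add]
  have right_ext : ∑ s ∈ Finset.range N, F s = ∑ s ∈ Finset.range (N + m), F s := by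
    apply Finset.sum_subset
    · intro s hs
      exact Finset.mem_range.mpr (by have := Finset.mem_range.mp hs; omega)
    · intro s hs hs2
      exact hF0 s (by by_contra hc; exact hs2 (Finset.mem_range.mpr (by omega)))
  rw [shift, left_ext, right_ext]

/-- uFun as a comodule morphism. -/
def uHom (hΓ : IsDividedPowerCoalgebra bΓ) (hV : IsJordanComod bΓ N V bV) (X : RComod k Γ)
    (ψ : X.carrier →ₗ[k] k) (hψ : ψ ∘ₗ E bΓ X N = 0) : RComodHom X V :=
  ⟨uFun bΓ bV X ψ, comm_of_E_comm bΓ _ (fun m => uFun_E_comm bΓ bV hΓ hV X ψ hψ m)⟩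

lemma Ey_zero (hΓ : IsDividedPowerCoalgebra bΓ) (X : RComod k Γ) (D : ℕ) (y : X.carrier)
    (hy : E bΓ X D y = 0) (j : ℕ) (hj : D ≤ j) : E bΓ X j y = 0 := by
  have h := E_E bΓ hΓ X (j - D) D y
  rw [hy, map_zero] at h
  rw [show j = j - D + D by omega]
  exact h.symm

/-- The comodule morphism `V → X` attached to `y` with `E_N y = 0`. -/
def sFun (X : RComod k Γ) (y : X.carrier) : V.carrier →ₗ[k] X.carrier :=
  bV.constr k (fun t => E bΓ X t.1 y)

lemma sFun_basis (X : RComod k Γ) (y : X.carrier) (t : Fin N) :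
    sFun bΓ bV X y (bV t) = E bΓ X t.1 y := bV.constr_basis k _ t

lemma sFun_E_comm (hΓ : IsDividedPowerCoalgebra bΓ) (hV : IsJordanComod bΓ N V bV)
    (X : RComod k Γ) (y : X.carrier) (hy : E bΓ X N y = 0) (m : ℕ) :
    E bΓ X m ∘ₗ sFun bΓ bV X y = sFun bΓ bV X y ∘ₗ E bΓ V m := by
  apply bV.ext
  intro t
  rw [LinearMap.comp_apply, LinearMap.comp_apply, sFun_basis, E_E bΓ hΓ,
    ← BV_lt bV t, E_BV bΓ bV hV]
  by_cases h : t.1 + m < N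
  · rw [BV, dif_pos h, sFun_basis]
    show E bΓ X (m + t.1) y = E bΓ X (t.1 + m) y
    rw [Nat.add_comm]
  · rw [BV, dif_neg h, map_zero]
    exact Ey_zero bΓ hΓ X N y hy (m + t.1) (by omega)

def sHom (hΓ : IsDividedPowerCoalgebra bΓ) (hV : IsJordanComod bΓ N V bV) (X : RComod k Γ)
    (y : X.carrier) (hy : E bΓ X N y = 0) : RComodHom V X :=
  ⟨sFun bΓ bV X y, comm_of_E_comm bΓ _ (fun m => sFun_E_comm bΓ bV hΓ hV X y hy m)⟩

lemma coordTop (hV : IsJordanComod bΓ N V bV) (hN : 0 < N) (s : Fin N) :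
    bV.coord ⟨N - 1, by omega⟩ ∘ₗ E bΓ V (N - 1 - s.1) = bV.coord s := by
  apply bV.ext
  intro r
  rw [LinearMap.comp_apply, ← BV_lt bV r, E_BV bΓ bV hV, coord_BV, coord_BV]
  have h2 := r.2
  have h3 := s.2
  have heq : (r.1 + (N - 1 - s.1) = (⟨N - 1, by omega⟩ : Fin N).1) ↔ r.1 = s.1 := by
    simp only []
    omega
  simp only [heq]

lemma hom_psi_zero (hV : IsJordanComod bΓ N V bV) (hN : 0 < N) {X : RComod k Γ}
    (u : RComodHom X V) :
    (bV.coord ⟨N - 1, by omega⟩ ∘ₗ u.toFun) ∘ₗ E bΓ X N = 0 := by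
  rw [LinearMap.comp_assoc, ← E_comm bΓ u.toFun u.comm N,
    E_jordan_zero bΓ bV hV N le_rfl]
  ext x
  simp

lemma hom_eq_uFun (hV : IsJordanComod bΓ N V bV) (hN : 0 < N) {X : RComod k Γ}
    (u : RComodHom X V) :
    u.toFun = uFun bΓ bV X (bV.coord ⟨N - 1, by omega⟩ ∘ₗ u.toFun) := by
  ext x
  rw [uFun_apply,
    ← Fin.sum_univ_eq_sum_range
      (fun j => (bV.coord ⟨N - 1, by omega⟩ ∘ₗ u.toFun) (E bΓ X (N - 1 - j) x) • BV bV j) N]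
  conv_lhs => rw [← bV.sum_repr (u.toFun x)]
  apply Finset.sum_congr rfl
  intro i _
  rw [BV_lt]
  congr 1
  have h1 := LinearMap.congr_fun (coordTop bΓ bV hV hN i) (u.toFun x)
  have h2 := LinearMap.congr_fun (E_comm bΓ u.toFun u.comm (N - 1 - i.1)) x
  simp only [LinearMap.comp_apply] at h1 h2 ⊢
  rw [← h2, h1, Module.Basis.coord_apply]

lemma hom_y_zero (hV : IsJordanComod bΓ N V bV) {X : RComod k Γ} (v : RComodHom V X)
    (z : V.carrier) :
    E bΓ X N (v.toFun z) = 0 := by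
  have h := LinearMap.congr_fun (E_comm bΓ v.toFun v.comm N) z
  simp only [LinearMap.comp_apply] at h
  rw [h, E_jordan_zero bΓ bV hV N le_rfl]
  simp

lemma hom_from_jordan (hV : IsJordanComod bΓ N V bV) (hN : 0 < N) {X : RComod k Γ}
    (v : RComodHom V X) :
    v.toFun = sFun bΓ bV X (v.toFun (bV ⟨0, hN⟩)) := by
  apply bV.ext
  intro t
  rw [sFun_basis]
  have h1 : bV t = E bΓ V t.1 (bV ⟨0, hN⟩) := by
    rw [← BV_lt bV ⟨0, hN⟩, E_BV bΓ bV hV]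
    simp only []
    rw [zero_add, BV_lt]
  have h2 := LinearMap.congr_fun (E_comm bΓ v.toFun v.comm t.1) (bV ⟨0, hN⟩)
  simp only [LinearMap.comp_apply] at h2
  rw [h1, ← h2]

lemma uFun_sFun_id (hΓ : IsDividedPowerCoalgebra bΓ) (hV : IsJordanComod bΓ N V bV)
    (hN : 0 < N) (X : RComod k Γ) (ψ : X.carrier →ₗ[k] k) (y : X.carrier)
    (hy : E bΓ X N y = 0) (hy1 : ψ (E bΓ X (N - 1) y) = 1)
    (hy0 : ∀ j < N - 1, ψ (E bΓ X j y) = 0) :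
    uFun bΓ bV X ψ ∘ₗ sFun bΓ bV X y = LinearMap.id := by
  apply bV.ext
  intro t
  rw [LinearMap.comp_apply, sFun_basis, uFun_apply, LinearMap.id_apply]
  have step : ∀ r ∈ Finset.range N,
      ψ (E bΓ X (N - 1 - r) (E bΓ X t.1 y)) • BV bV r
        = if r = t.1 then BV bV r else 0 := by
    intro r hr
    have hrN := Finset.mem_range.mp hr
    have ht := t.2
    rw [E_E bΓ hΓ]
    by_cases h : r = t.1
    · have he : N - 1 - r + t.1 = N - 1 := by omega
      rw [he, hy1, one_smul, if_pos h]
    · rw [if_neg h]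
      by_cases h2 : r < t.1
      · rw [Ey_zero bΓ hΓ X N y hy (N - 1 - r + t.1) (by omega), map_zero, zero_smul]
      · rw [hy0 (N - 1 - r + t.1) (by omega), zero_smul]
  rw [Finset.sum_congr rfl step, Finset.sum_ite_eq' (Finset.range N) t.1 (BV bV),
    if_pos (Finset.mem_range.mpr t.2), BV_lt]

end Jordan

section Adjust

variable (hΓ : IsDividedPowerCoalgebra bΓ)

lemma adjust_y (hΓ : IsDividedPowerCoalgebra bΓ) (X : RComod k Γ) (K : ℕ)
    (ψ : X.carrier →ₗ[k] k) (y₀ : X.carrier)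
    (h0 : E bΓ X (K + 1) y₀ = 0) (hc : ψ (E bΓ X K y₀) ≠ 0) :
    ∃ y, E bΓ X (K + 1) y = 0 ∧ ψ (E bΓ X K y) = 1 ∧ ∀ j < K, ψ (E bΓ X j y) = 0 := by
  have key : ∀ d, ∃ y, E bΓ X (K + 1) y = 0 ∧ ψ (E bΓ X K y) = 1 ∧
      ∀ j, j < K → K - d ≤ j → ψ (E bΓ X j y) = 0 := by
    intro d
    induction d with
    | zero =>
      refine ⟨(ψ (E bΓ X K y₀))⁻¹ • y₀, by rw [map_smul, h0, smul_zero], ?_, ?_⟩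
      · rw [map_smul, map_smul, smul_eq_mul, inv_mul_cancel₀ hc]
      · intro j hj hj2
        omega
    | succ d ih =>
      obtain ⟨y, hy0, hy1, hys⟩ := ih
      by_cases hd : K ≤ d
      · exact ⟨y, hy0, hy1, fun j hj hj2 => hys j hj (by omega)⟩
      · set a := ψ (E bΓ X (K - d - 1) y) with ha
        refine ⟨y - a • E bΓ X (d + 1) y, ?_, ?_, ?_⟩
        · simp only [map_sub, map_smul, hy0, E_E bΓ hΓ]
          rw [Ey_zero bΓ hΓ X (K + 1) y hy0 (K + 1 + (d + 1)) (by omega)]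
          simp
        · simp only [map_sub, map_smul, E_E bΓ hΓ, hy1]
          rw [Ey_zero bΓ hΓ X (K + 1) y hy0 (K + (d + 1)) (by omega)]
          simp
        · intro j hj hj2
          simp only [map_sub, map_smul, E_E bΓ hΓ, smul_eq_mul]
          by_cases hjj : j = K - d - 1
          · subst hjj
            have he : K - d - 1 + (d + 1) = K := by omega
            rw [he, hy1, mul_one, sub_self]
          · have h3 : K - d ≤ j := by omega
            rw [hys j hj h3, Ey_zero bΓ hΓ X (K + 1) y hy0 (j + (d + 1)) (by omega)]
            simp
  obtain ⟨y, h1, h2, h3⟩ := key K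
  exact ⟨y, h1, h2, fun j hj => h3 j hj (by omega)⟩

lemma adjust_psi (hΓ : IsDividedPowerCoalgebra bΓ) (X : RComod k Γ) (K : ℕ)
    (y : X.carrier) (hy : E bΓ X (K + 1) y = 0)
    (ψ₀ : X.carrier →ₗ[k] k) (h0 : ψ₀ ∘ₗ E bΓ X (K + 1) = 0) (hc : ψ₀ (E bΓ X K y) ≠ 0) :
    ∃ ψ : X.carrier →ₗ[k] k, ψ ∘ₗ E bΓ X (K + 1) = 0 ∧ ψ (E bΓ X K y) = 1 ∧
      ∀ j < K, ψ (E bΓ X j y) = 0 := by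
  have key : ∀ d, ∃ ψ : X.carrier →ₗ[k] k, ψ ∘ₗ E bΓ X (K + 1) = 0 ∧
      ψ (E bΓ X K y) = 1 ∧ ∀ j, j < K → K - d ≤ j → ψ (E bΓ X j y) = 0 := by
    intro d
    induction d with
    | zero =>
      refine ⟨(ψ₀ (E bΓ X K y))⁻¹ • ψ₀, ?_, ?_, ?_⟩
      · rw [LinearMap.smul_comp, h0, smul_zero]
      · rw [LinearMap.smul_apply, smul_eq_mul, inv_mul_cancel₀ hc]
      · intro j hj hj2
        omega
    | succ d ih =>
      obtain ⟨ψ, hψ0, hψ1, hψs⟩ := ih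
      by_cases hd : K ≤ d
      · exact ⟨ψ, hψ0, hψ1, fun j hj hj2 => hψs j hj (by omega)⟩
      · set a := ψ (E bΓ X (K - d - 1) y) with ha
        refine ⟨ψ - a • (ψ ∘ₗ E bΓ X (d + 1)), ?_, ?_, ?_⟩
        · rw [LinearMap.sub_comp, hψ0, LinearMap.smul_comp, LinearMap.comp_assoc,
            E_add bΓ hΓ, psi_zero bΓ hΓ ψ hψ0 (d + 1 + (K + 1)) (by omega)]
          simp
        · simp only [LinearMap.sub_apply, LinearMap.smul_apply, LinearMap.comp_apply,
            E_E bΓ hΓ, hψ1]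
          rw [Ey_zero bΓ hΓ X (K + 1) y hy (d + 1 + K) (by omega)]
          simp
        · intro j hj hj2
          simp only [LinearMap.sub_apply, LinearMap.smul_apply, LinearMap.comp_apply,
            E_E bΓ hΓ, smul_eq_mul]
          by_cases hjj : j = K - d - 1
          · subst hjj
            have he : d + 1 + (K - d - 1) = K := by omega
            rw [he, hψ1, mul_one, sub_self]
          · have h3 : K - d ≤ j := by omega
            rw [hψs j hj h3, Ey_zero bΓ hΓ X (K + 1) y hy (d + 1 + j) (by omega)]
            simp
  obtain ⟨ψ, h1, h2, h3⟩ := key K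
  exact ⟨ψ, h1, h2, fun j hj => h3 j hj (by omega)⟩

lemma exists_comp_eq (X : Type u) [AddCommGroup X] [Module k X] (T : X →ₗ[k] X)
    (φ : X →ₗ[k] k) (h : ∀ y, T y = 0 → φ y = 0) : ∃ ψ : X →ₗ[k] k, ψ ∘ₗ T = φ := by
  have hker : LinearMap.ker T ≤ LinearMap.ker φ := fun y hy => h y hy
  set g : (X ⧸ LinearMap.ker T) →ₗ[k] k := (LinearMap.ker T).liftQ φ hker with hg
  set ι := T.quotKerEquivRange with hι
  obtain ⟨ψ, hψ⟩ := LinearMap.exists_extend (g ∘ₗ (ι.symm : LinearMap.range T →ₗ[k] _))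
  refine ⟨ψ, ?_⟩
  ext x
  have hmem : T x ∈ LinearMap.range T := LinearMap.mem_range_self T x
  have h2 := LinearMap.congr_fun hψ ⟨T x, hmem⟩
  simp only [LinearMap.comp_apply, Submodule.coe_subtype] at h2
  have h3 : (ι.symm ⟨T x, hmem⟩ : X ⧸ LinearMap.ker T) = (LinearMap.ker T).mkQ x := by
    rw [hι]
    exact T.quotKerEquivRange_symm_apply_image x hmem
  rw [LinearMap.comp_apply, h2]
  have h4 : (↑ι.symm : (LinearMap.range T) →ₗ[k] (X ⧸ LinearMap.ker T)) ⟨T x, hmem⟩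
      = (LinearMap.ker T).mkQ x := h3
  rw [h4, hg, Submodule.mkQ_apply, Submodule.liftQ_apply]

lemma exists_sep_functional (X : Type u) [AddCommGroup X] [Module k X]
    (p : Submodule k X) (x : X) (hx : x ∉ p) :
    ∃ ψ : X →ₗ[k] k, (∀ z, z ∈ p → ψ z = 0) ∧ ψ x = 1 := by
  have hxq : (Submodule.Quotient.mk x : X ⧸ p) ≠ 0 := by
    rw [Ne, Submodule.Quotient.mk_eq_zero]
    exact hx
  obtain ⟨g, hg⟩ := LinearMap.exists_extend
    ((LinearEquiv.coord k (X ⧸ p) _ hxq).toLinearMap)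
  refine ⟨g ∘ₗ p.mkQ, ?_, ?_⟩
  · intro z hz
    have : p.mkQ z = 0 := by
      rw [Submodule.mkQ_apply, Submodule.Quotient.mk_eq_zero]
      exact hz
    rw [LinearMap.comp_apply, this, map_zero]
  · have h1 := LinearMap.congr_fun hg
      ⟨Submodule.Quotient.mk x, Submodule.mem_span_singleton_self _⟩
    simp only [LinearMap.comp_apply, Submodule.coe_subtype, LinearEquiv.coe_toLinearMap] at h1
    rw [LinearMap.comp_apply, Submodule.mkQ_apply, h1, LinearEquiv.coord_self]

end Adjust

section Hom

variable {M N : RComod k Γ}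

lemma comm_add {f g : M.carrier →ₗ[k] N.carrier}
    (hf : N.coact ∘ₗ f = f.rTensor Γ ∘ₗ M.coact)
    (hg : N.coact ∘ₗ g = g.rTensor Γ ∘ₗ M.coact) :
    N.coact ∘ₗ (f + g) = (f + g).rTensor Γ ∘ₗ M.coact := by
  rw [LinearMap.comp_add, hf, hg, LinearMap.rTensor_add, LinearMap.add_comp]

lemma comm_sub {f g : M.carrier →ₗ[k] N.carrier}
    (hf : N.coact ∘ₗ f = f.rTensor Γ ∘ₗ M.coact)
    (hg : N.coact ∘ₗ g = g.rTensor Γ ∘ₗ M.coact) :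
    N.coact ∘ₗ (f - g) = (f - g).rTensor Γ ∘ₗ M.coact := by
  rw [LinearMap.comp_sub, hf, hg, LinearMap.rTensor_sub, LinearMap.sub_comp]

lemma comm_id : M.coact ∘ₗ (LinearMap.id : M.carrier →ₗ[k] M.carrier)
    = (LinearMap.id : M.carrier →ₗ[k] M.carrier).rTensor Γ ∘ₗ M.coact := by simp

/-- Sum of comodule morphisms. -/
def addHom (f g : RComodHom M N) : RComodHom M N :=
  ⟨f.toFun + g.toFun, comm_add f.comm g.comm⟩

end Hom

section Indec

variable (hΓ : IsDividedPowerCoalgebra bΓ)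
variable {N : ℕ} {V : RComod k Γ} (bV : Module.Basis (Fin N) k V.carrier)

lemma coord_sum (c : ℕ → k) (s : Fin N) :
    bV.coord s (∑ t ∈ Finset.range N, c t • BV bV t) = c s.1 := by
  rw [map_sum]
  have step : ∀ t ∈ Finset.range N, bV.coord s (c t • BV bV t)
      = if t = s.1 then c t else 0 := by
    intro t ht
    rw [map_smul, coord_BV, smul_eq_mul, mul_ite, mul_one, mul_zero]
  rw [Finset.sum_congr rfl step, Finset.sum_ite_eq' (Finset.range N) s.1 c,
    if_pos (Finset.mem_range.mpr s.2)]

/-- Toeplitz coefficients of an endomorphism of a Jordan comodule. -/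
def aCoeff (hN : 0 < N) (e : RComodHom V V) (m : ℕ) : k :=
  bV.coord ⟨N - 1, by omega⟩ (e.toFun (BV bV (N - 1 - m)))

lemma e_BV_eq (hΓ : IsDividedPowerCoalgebra bΓ) (hV : IsJordanComod bΓ N V bV) (hN : 0 < N)
    (e : RComodHom V V) (t : ℕ) :
    e.toFun (BV bV t) = ∑ r ∈ Finset.range N,
      (bV.coord ⟨N - 1, by omega⟩ ∘ₗ e.toFun) (BV bV (t + (N - 1 - r))) • BV bV r := by
  conv_lhs => rw [hom_eq_uFun bΓ bV hV hN e]
  rw [uFun_apply]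
  apply Finset.sum_congr rfl
  intro r hr
  rw [E_BV bΓ bV hV]

lemma coeff_e (hΓ : IsDividedPowerCoalgebra bΓ) (hV : IsJordanComod bΓ N V bV) (hN : 0 < N)
    (e : RComodHom V V) (t : ℕ) (s : Fin N) :
    bV.coord s (e.toFun (BV bV t))
      = if t ≤ s.1 then aCoeff bV hN e (s.1 - t) else 0 := by
  by_cases htN : t < N
  · rw [e_BV_eq bΓ bV hΓ hV hN e t,
      coord_sum bV (fun r => (bV.coord ⟨N - 1, by omega⟩ ∘ₗ e.toFun) (BV bV (t + (N - 1 - r)))) s]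
    have hs := s.2
    by_cases h : t ≤ s.1
    · rw [if_pos h]
      have he : t + (N - 1 - s.1) = N - 1 - (s.1 - t) := by omega
      rw [LinearMap.comp_apply, he, aCoeff]
    · rw [if_neg h, LinearMap.comp_apply, BV, dif_neg (by omega), map_zero, map_zero]
  · rw [BV, dif_neg htN, map_zero, map_zero, if_neg (by have := s.2; omega)]

lemma coeff_rec (hΓ : IsDividedPowerCoalgebra bΓ) (hV : IsJordanComod bΓ N V bV) (hN : 0 < N)
    (e : RComodHom V V) (hidem : e.toFun ∘ₗ e.toFun = e.toFun) (r : ℕ) (hr : r < N) :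
    aCoeff bV hN e r = ∑ t ∈ Finset.range (r + 1),
      aCoeff bV hN e t * aCoeff bV hN e (r - t) := by
  have hx := LinearMap.congr_fun hidem (BV bV 0)
  rw [LinearMap.comp_apply] at hx
  have h1 := congrArg (bV.coord ⟨r, hr⟩) hx
  rw [e_BV_eq bΓ bV hΓ hV hN e 0] at h1
  simp only [map_sum, map_smul] at h1
  have h2 : ∀ j ∈ Finset.range N,
      (bV.coord ⟨N - 1, by omega⟩ ∘ₗ e.toFun) (BV bV (0 + (N - 1 - j))) •
        bV.coord ⟨r, hr⟩ (e.toFun (BV bV j))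
      = aCoeff bV hN e j * (if j ≤ r then aCoeff bV hN e (r - j) else 0) := by
    intro j hj
    rw [coeff_e bΓ bV hΓ hV hN e j ⟨r, hr⟩, LinearMap.comp_apply, smul_eq_mul, Nat.zero_add]
    rfl
  rw [Finset.sum_congr rfl h2] at h1
  have h3 : ∀ j ∈ Finset.range N,
      (bV.coord ⟨N - 1, by omega⟩ ∘ₗ e.toFun) (BV bV (0 + (N - 1 - j))) •
        bV.coord ⟨r, hr⟩ (BV bV j)
      = aCoeff bV hN e j * (if j = r then 1 else 0) := by
    intro j hj
    rw [coord_BV, LinearMap.comp_apply, smul_eq_mul, Nat.zero_add]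
    rfl
  rw [Finset.sum_congr rfl h3] at h1
  have hR : ∑ j ∈ Finset.range N, aCoeff bV hN e j * (if j = r then 1 else 0)
      = aCoeff bV hN e r := by
    have step : ∀ j ∈ Finset.range N, aCoeff bV hN e j * (if j = r then 1 else 0)
        = if j = r then aCoeff bV hN e j else 0 := by
      intro j _
      rw [mul_ite, mul_one, mul_zero]
    rw [Finset.sum_congr rfl step, Finset.sum_ite_eq' (Finset.range N) r,
      if_pos (Finset.mem_range.mpr hr)]
  have hL : ∑ j ∈ Finset.range N,
        aCoeff bV hN e j * (if j ≤ r then aCoeff bV hN e (r - j) else 0)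
      = ∑ t ∈ Finset.range (r + 1), aCoeff bV hN e t * aCoeff bV hN e (r - t) := by
    rw [← Finset.sum_subset (Finset.range_subset_range.mpr (by omega : r + 1 ≤ N))
      (fun x _ hx => by
        rw [if_neg (by simp only [Finset.mem_range] at hx; omega), mul_zero])]
    apply Finset.sum_congr rfl
    intro j hj
    rw [if_pos (by have := Finset.mem_range.mp hj; omega)]
  rw [← hL, h1, hR]

lemma idem_coeff_zero (hΓ : IsDividedPowerCoalgebra bΓ) (hV : IsJordanComod bΓ N V bV)
    (hN : 0 < N) (e : RComodHom V V) (hidem : e.toFun ∘ₗ e.toFun = e.toFun)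
    (h0 : aCoeff bV hN e 0 = 0) : e.toFun = 0 := by
  have hall : ∀ r, r < N → aCoeff bV hN e r = 0 := by
    intro r
    induction r using Nat.strong_induction_on with
    | _ r ih =>
      intro hr
      rw [coeff_rec bΓ bV hΓ hV hN e hidem r hr]
      apply Finset.sum_eq_zero
      intro t ht
      have htr := Finset.mem_range.mp ht
      by_cases h0t : t = 0
      · subst h0t
        rw [h0, zero_mul]
      · by_cases htr2 : t = r
        · subst htr2
          rw [Nat.sub_self, h0, mul_zero]
        · rw [ih t (by omega) (by omega), zero_mul]
  apply bV.ext
  intro t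
  apply bV.ext_elem
  intro s
  rw [show (0 : V.carrier →ₗ[k] V.carrier) (bV t) = 0 from rfl, map_zero,
    ← Module.Basis.coord_apply, ← BV_lt bV t, coeff_e bΓ bV hΓ hV hN e t.1 s]
  by_cases h : t.1 ≤ s.1
  · rw [if_pos h, hall (s.1 - t.1) (by have := s.2; omega)]
    simp
  · rw [if_neg h]
    simp

lemma jordan_indec (hΓ : IsDividedPowerCoalgebra bΓ) (hV : IsJordanComod bΓ N V bV)
    (hN : 0 < N) : Indecomposable V := by
  constructor
  · exact nontrivial_of_ne (bV ⟨0, hN⟩) 0 (bV.ne_zero _)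
  · intro e he
    have hidem : e.toFun ∘ₗ e.toFun = e.toFun := congrArg RComodHom.toFun he
    have hrec0 := coeff_rec bΓ bV hΓ hV hN e hidem 0 hN
    norm_num [Finset.sum_range_one] at hrec0
    by_cases h0 : aCoeff bV hN e 0 = 0
    · right
      exact idem_coeff_zero bΓ bV hΓ hV hN e hidem h0
    · left
      have ha1 : aCoeff bV hN e 0 = 1 :=
        mul_left_cancel₀ h0 (by rw [mul_one, ← hrec0])
      set e' : RComodHom V V := ⟨LinearMap.id - e.toFun, comm_sub comm_id e.comm⟩ with he'
      have hidem' : e'.toFun ∘ₗ e'.toFun = e'.toFun := by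
        ext x
        have hxx := LinearMap.congr_fun hidem x
        simp only [he', LinearMap.comp_apply, LinearMap.sub_apply, LinearMap.id_apply,
          map_sub] at hxx ⊢
        rw [hxx]
        abel
      have h0' : aCoeff bV hN e' 0 = 0 := by
        show bV.coord ⟨N - 1, by omega⟩ (e'.toFun (BV bV (N - 1 - 0))) = 0
        simp only [he', LinearMap.sub_apply, LinearMap.id_apply, map_sub]
        have h2 : bV.coord ⟨N - 1, by omega⟩ (e.toFun (BV bV (N - 1 - 0)))
            = aCoeff bV hN e 0 := rfl
        have hBV : BV bV (N - 1 - 0) = bV ⟨N - 1, by omega⟩ := by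
          rw [Nat.sub_zero, BV, dif_pos (by omega : N - 1 < N)]
        rw [h2, ha1, hBV, Module.Basis.coord_apply, Module.Basis.repr_self, Finsupp.single_eq_same, sub_self]
      have hzero' : LinearMap.id - e.toFun = 0 :=
        idem_coeff_zero bΓ bV hΓ hV hN e' hidem' h0'
      have htf : e.toFun = LinearMap.id := by
        have := sub_eq_zero.mp hzero'
        exact this.symm
      exact RComodHom.ext htf

end Indec

lemma ext_of_cover {M Z : Type u} [AddCommGroup M] [Module k M] [AddCommGroup Z] [Module k Z]
    (p : ℕ → Submodule k M) (hp : (⨆ n, p n) = ⊤) (H : M →ₗ[k] Z)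
    (h : ∀ n, p n ≤ LinearMap.ker H) : H = 0 := by
  have : LinearMap.ker H = ⊤ := by
    rw [eq_top_iff, ← hp]
    exact iSup_le h
  exact LinearMap.ker_eq_top.mp this

end ARLimit





set_option maxHeartbeats 2000000 in
/-- Over the path coalgebra of the one-loop quiver (the divided power
coalgebra), the sequences `d_n : 0 → V_{n+1} → V_n ⊕ V_{n+2} → V_{n+1} → 0` (with the
canonical truncations `b` and inclusions `a` as components) are almost split, but their
direct limit (along the canonical connecting maps, with colimit `V = lim V_n ≅ kQ` the
regular comodule, covered by the maps `e n` with `⨆ range (e n) = ⊤`) is a split short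
exact sequence `0 → V → V ⊕ V → V → 0`.  In particular the direct limit of almost split
sequences need not be almost split. -/
theorem limit_of_almost_split_sequences_splits
    (bΓ : Module.Basis ℕ k Γ) (hΓ : IsDividedPowerCoalgebra bΓ)
    (V : ℕ → RComod k Γ) (bV : ∀ n, Module.Basis (Fin n) k (V n).carrier)
    (hV : ∀ n, IsJordanComod bΓ n (V n) (bV n))
    -- the canonical inclusions `a n : V_n → V_{n+1}, v_t ↦ v_{t+1}`:
    (a : ∀ n, RComodHom (V n) (V (n + 1)))
    (ha : ∀ n (t : Fin n), (a n).toFun (bV n t)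
      = bV (n + 1) ⟨t.1 + 1, by have := t.2; omega⟩)
    -- the canonical truncations `b n : V_{n+1} → V_n`:
    (b : ∀ n, RComodHom (V (n + 1)) (V n))
    (hb : ∀ n (t : Fin (n + 1)), (b n).toFun (bV (n + 1) t)
      = if h : t.1 < n then bV n ⟨t.1, h⟩ else 0)
    -- the middle terms, biproducts `W n = V_n ⊕ V_{n+2}`:
    (W : ∀ n, RComod k Γ)
    (ι₁ : ∀ n, RComodHom (V n) (W n)) (ι₂ : ∀ n, RComodHom (V (n + 2)) (W n))
    (π₁ : ∀ n, RComodHom (W n) (V n)) (π₂ : ∀ n, RComodHom (W n) (V (n + 2)))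
    (hb1 : ∀ n, (π₁ n).toFun ∘ₗ (ι₁ n).toFun = LinearMap.id)
    (hb2 : ∀ n, (π₂ n).toFun ∘ₗ (ι₂ n).toFun = LinearMap.id)
    (hb3 : ∀ n, (π₁ n).toFun ∘ₗ (ι₂ n).toFun = 0)
    (hb4 : ∀ n, (π₂ n).toFun ∘ₗ (ι₁ n).toFun = 0)
    (hb5 : ∀ n, (ι₁ n).toFun ∘ₗ (π₁ n).toFun + (ι₂ n).toFun ∘ₗ (π₂ n).toFun
      = LinearMap.id)
    -- the maps of the sequences `d_n`:
    (f : ∀ n, RComodHom (V (n + 1)) (W n))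
    (hf : ∀ n, (f n).toFun = (ι₁ n).toFun ∘ₗ (b n).toFun
      + (ι₂ n).toFun ∘ₗ (a (n + 1)).toFun)
    (g : ∀ n, RComodHom (W n) (V (n + 1)))
    (hg : ∀ n, (g n).toFun = (a n).toFun ∘ₗ (π₁ n).toFun
      - (b (n + 1)).toFun ∘ₗ (π₂ n).toFun)
    -- the colimit `V = lim V_n ≅ kQ`, with structure maps `e n : V_n → Γ`:
    (e : ∀ n, RComodHom (V n) (regComod k Γ))
    (he : ∀ n (t : Fin n), (e n).toFun (bV n t) = bΓ (n - 1 - t.1))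
    (hecompat : ∀ n, (e (n + 1)).toFun ∘ₗ (a n).toFun = (e n).toFun)
    (hcover : (⨆ n, LinearMap.range (e n).toFun) = ⊤)
    -- the limiting sequence `0 → V → V ⊕ V → V → 0`:
    (WΓ : RComod k Γ)
    (I₁ I₂ : RComodHom (regComod k Γ) WΓ) (P₁ P₂ : RComodHom WΓ (regComod k Γ))
    (hB1 : P₁.toFun ∘ₗ I₁.toFun = LinearMap.id)
    (hB2 : P₂.toFun ∘ₗ I₂.toFun = LinearMap.id)
    (hB3 : P₁.toFun ∘ₗ I₂.toFun = 0)
    (hB4 : P₂.toFun ∘ₗ I₁.toFun = 0)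
    (hB5 : I₁.toFun ∘ₗ P₁.toFun + I₂.toFun ∘ₗ P₂.toFun = LinearMap.id)
    (F : RComodHom (regComod k Γ) WΓ) (G : RComodHom WΓ (regComod k Γ))
    (hF : ∀ n, F.toFun ∘ₗ (e (n + 1)).toFun
      = I₁.toFun ∘ₗ (e n).toFun ∘ₗ (b n).toFun
        + I₂.toFun ∘ₗ (e (n + 2)).toFun ∘ₗ (a (n + 1)).toFun)
    (hG1 : ∀ n, G.toFun ∘ₗ I₁.toFun ∘ₗ (e n).toFun
      = (e (n + 1)).toFun ∘ₗ (a n).toFun)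
    (hG2 : ∀ n, G.toFun ∘ₗ I₂.toFun ∘ₗ (e (n + 2)).toFun
      = - ((e (n + 1)).toFun ∘ₗ (b (n + 1)).toFun)) :
    (∀ n, IsAlmostSplit (f n) (g n))
      ∧ IsExactSeq F G
      ∧ IsSplitEpi G ∧ IsSplitMono F := by
  open ARLimit in
  · classical
    -- ℕ-indexed descriptions of the canonical maps
    have haBV : ∀ n (j : ℕ), (a n).toFun (BV (bV n) j) = BV (bV (n + 1)) (j + 1) := by
      intro n j
      by_cases hj : j < n
      · rw [BV, dif_pos hj, ha n ⟨j, hj⟩, BV, dif_pos (by omega : j + 1 < n + 1)]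
      · rw [BV, dif_neg hj, map_zero, BV, dif_neg (by omega)]
    have hbBV : ∀ n (j : ℕ), (b n).toFun (BV (bV (n + 1)) j) = BV (bV n) j := by
      intro n j
      by_cases hj : j < n + 1
      · rw [BV, dif_pos hj, hb n ⟨j, hj⟩]
        by_cases hj2 : j < n
        · rw [dif_pos (show (⟨j, hj⟩ : Fin (n + 1)).1 < n from hj2), BV, dif_pos hj2]
        · rw [dif_neg (show ¬ (⟨j, hj⟩ : Fin (n + 1)).1 < n from hj2), BV, dif_neg hj2]
      · rw [BV, dif_neg hj, map_zero, BV, dif_neg (by omega)]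
    have habba : ∀ n, (a n).toFun ∘ₗ (b n).toFun
        = (b (n + 1)).toFun ∘ₗ (a (n + 1)).toFun := by
      intro n
      apply (bV (n + 1)).ext
      intro t
      rw [LinearMap.comp_apply, LinearMap.comp_apply, ← BV_lt (bV (n + 1)) t,
        hbBV n t.1, haBV n t.1, haBV (n + 1) t.1, hbBV (n + 1) (t.1 + 1)]
    have hrange : ∀ m, LinearMap.range (e m).toFun ≤ LinearMap.range (e (m + 1)).toFun := by
      intro m z hz
      obtain ⟨x, hx⟩ := hz
      refine ⟨(a m).toFun x, ?_⟩
      have := LinearMap.congr_fun (hecompat m) x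
      rw [LinearMap.comp_apply] at this
      rw [this, hx]
    have hext : ∀ (H : Γ →ₗ[k] (WΓ.carrier)) ,
        (∀ n, H ∘ₗ (e (n + 1)).toFun = 0) → H = 0 := by
      intro H hH
      apply ext_of_cover (fun n => LinearMap.range (e n).toFun) hcover H
      intro n
      match n with
      | 0 => exact le_trans (hrange 0) (LinearMap.range_le_ker_iff.mpr (hH 0))
      | Nat.succ m => exact LinearMap.range_le_ker_iff.mpr (hH m)
    have hextΓ : ∀ (H : (regComod k Γ).carrier →ₗ[k] (regComod k Γ).carrier), (∀ n, H ∘ₗ (e (n + 1)).toFun = 0) → H = 0 := by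
      intro H hH
      apply ext_of_cover (fun n => LinearMap.range (e n).toFun) hcover H
      intro n
      match n with
      | 0 => exact le_trans (hrange 0) (LinearMap.range_le_ker_iff.mpr (hH 0))
      | Nat.succ m => exact LinearMap.range_le_ker_iff.mpr (hH m)
    have idGI : G.toFun ∘ₗ I₁.toFun = LinearMap.id := by
      have h0 : (G.toFun ∘ₗ I₁.toFun - LinearMap.id) = 0 := by
        apply hextΓ
        intro n
        rw [LinearMap.sub_comp, LinearMap.id_comp, LinearMap.comp_assoc, hG1 (n + 1),
          hecompat (n + 1), sub_self]
      rw [← sub_eq_zero]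
      exact h0
    have idPF : P₂.toFun ∘ₗ F.toFun = LinearMap.id := by
      have h0 : (P₂.toFun ∘ₗ F.toFun - LinearMap.id) = 0 := by
        apply hextΓ
        intro n
        rw [LinearMap.sub_comp, LinearMap.id_comp, LinearMap.comp_assoc, hF n]
        rw [LinearMap.comp_add]
        simp only [← LinearMap.comp_assoc]
        rw [hB4, hB2]
        simp only [LinearMap.zero_comp, LinearMap.id_comp, zero_add, LinearMap.comp_assoc]
        rw [hecompat (n + 1), sub_self]
      rw [← sub_eq_zero]
      exact h0
    have hGF : G.toFun ∘ₗ F.toFun = 0 := by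
      apply hextΓ
      intro n
      rw [LinearMap.comp_assoc, hF n, LinearMap.comp_add]
      have t1 : G.toFun ∘ₗ I₁.toFun ∘ₗ (e n).toFun ∘ₗ (b n).toFun
          = (e (n + 1)).toFun ∘ₗ ((a n).toFun ∘ₗ (b n).toFun) := by
        simp only [← LinearMap.comp_assoc]
        rw [show ((G.toFun ∘ₗ I₁.toFun) ∘ₗ (e n).toFun) = ((e (n+1)).toFun ∘ₗ (a n).toFun) by
          simp only [LinearMap.comp_assoc]; exact hG1 n]
      have t2 : G.toFun ∘ₗ I₂.toFun ∘ₗ (e (n + 2)).toFun ∘ₗ (a (n + 1)).toFun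
          = -((e (n + 1)).toFun ∘ₗ ((b (n + 1)).toFun ∘ₗ (a (n + 1)).toFun)) := by
        simp only [← LinearMap.comp_assoc]
        rw [show ((G.toFun ∘ₗ I₂.toFun) ∘ₗ (e (n+2)).toFun)
            = -((e (n+1)).toFun ∘ₗ (b (n+1)).toFun) by
          simp only [LinearMap.comp_assoc]; exact hG2 n]
        simp only [LinearMap.neg_comp, LinearMap.comp_assoc]
      rw [t1, t2, habba n]
      simp
    -- almost split sequences
    refine ⟨?_, ?_, ?_, ?_⟩
    · intro n
      have hA : IsJordanComod bΓ (n + 1) (V (n + 1)) (bV (n + 1)) := hV (n + 1)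
      have hN : 0 < n + 1 := Nat.succ_pos n
      -- biproduct composition identities
      have c11 : ((a n).toFun ∘ₗ (π₁ n).toFun) ∘ₗ (ι₁ n).toFun = (a n).toFun := by
        rw [LinearMap.comp_assoc, hb1 n, LinearMap.comp_id]
      have c12 : ((a n).toFun ∘ₗ (π₁ n).toFun) ∘ₗ (ι₂ n).toFun = 0 := by
        rw [LinearMap.comp_assoc, hb3 n, LinearMap.comp_zero]
      have c21 : ((b (n + 1)).toFun ∘ₗ (π₂ n).toFun) ∘ₗ (ι₁ n).toFun = 0 := by
        rw [LinearMap.comp_assoc, hb4 n, LinearMap.comp_zero]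
      have c22 : ((b (n + 1)).toFun ∘ₗ (π₂ n).toFun) ∘ₗ (ι₂ n).toFun = (b (n + 1)).toFun := by
        rw [LinearMap.comp_assoc, hb2 n, LinearMap.comp_id]
      -- injectivity of the a's
      have hainj : ∀ m, Function.Injective (a m).toFun := by
        intro m
        set r : (V (m + 1)).carrier →ₗ[k] (V m).carrier :=
          (bV (m + 1)).constr k (fun s => if s.1 = 0 then 0 else BV (bV m) (s.1 - 1)) with hrdef
        have hcomp : r ∘ₗ (a m).toFun = LinearMap.id := by
          apply (bV m).ext
          intro t
          rw [LinearMap.comp_apply, ha m t, LinearMap.id_apply, hrdef, Module.Basis.constr_basis]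
          rw [if_neg (show ¬ ((⟨t.1 + 1, by omega⟩ : Fin (m + 1)).1 = 0) from
            Nat.succ_ne_zero t.1)]
          rw [show (⟨t.1 + 1, by omega⟩ : Fin (m + 1)).1 - 1 = t.1 from Nat.succ_sub_one t.1]
          exact BV_lt (bV m) t
        intro x y hxy
        have h1 := LinearMap.congr_fun hcomp x
        have h2 := LinearMap.congr_fun hcomp y
        simp only [LinearMap.comp_apply, LinearMap.id_apply] at h1 h2
        rw [← h1, ← h2, hxy]
      -- injectivity of f
      have hπ₂f : (π₂ n).toFun ∘ₗ (f n).toFun = (a (n + 1)).toFun := by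
        rw [hf n, LinearMap.comp_add]
        simp only [← LinearMap.comp_assoc]
        rw [hb4 n, hb2 n]
        simp
      have hfinj : Function.Injective (f n).toFun := by
        intro x y hxy
        apply hainj (n + 1)
        have h1 := LinearMap.congr_fun hπ₂f x
        have h2 := LinearMap.congr_fun hπ₂f y
        simp only [LinearMap.comp_apply] at h1 h2
        rw [← h1, ← h2, hxy]
      -- surjectivity of g
      have hgsurj : Function.Surjective (g n).toFun := by
        rw [← LinearMap.range_eq_top, eq_top_iff, ← (bV (n + 1)).span_eq]
        rw [Submodule.span_le]
        rintro _ ⟨t, rfl⟩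
        by_cases h0 : t.1 = 0
        · refine ⟨-(ι₂ n).toFun (bV (n + 2) ⟨0, by omega⟩), ?_⟩
          rw [map_neg, hg n]
          simp only [LinearMap.sub_apply, LinearMap.comp_apply]
          have e1 := LinearMap.congr_fun (hb3 n) (bV (n + 2) ⟨0, by omega⟩)
          have e2 := LinearMap.congr_fun (hb2 n) (bV (n + 2) ⟨0, by omega⟩)
          simp only [LinearMap.comp_apply, LinearMap.zero_apply, LinearMap.id_apply] at e1 e2
          rw [e1, e2, map_zero, zero_sub, neg_neg, hb (n + 1) ⟨0, by omega⟩,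
            dif_pos (show ((⟨0, by omega⟩ : Fin (n + 2)).1 < n + 1) from Nat.succ_pos n)]
          congr 1
          exact Fin.ext h0.symm
        · obtain ⟨sj, hs⟩ : ∃ sj, t.1 = sj + 1 := ⟨t.1 - 1, by omega⟩
          have hsj : sj < n := by have := t.2; omega
          refine ⟨(ι₁ n).toFun (bV n ⟨sj, hsj⟩), ?_⟩
          rw [hg n]
          simp only [LinearMap.sub_apply, LinearMap.comp_apply]
          have e1 := LinearMap.congr_fun (hb1 n) (bV n ⟨sj, hsj⟩)
          have e2 := LinearMap.congr_fun (hb4 n) (bV n ⟨sj, hsj⟩)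
          simp only [LinearMap.comp_apply, LinearMap.id_apply, LinearMap.zero_apply] at e1 e2
          rw [e1, e2, map_zero, sub_zero, ha n ⟨sj, hsj⟩]
          congr 1
          exact Fin.ext hs.symm
      -- g ∘ f = 0
      have hgf0 : (g n).toFun ∘ₗ (f n).toFun = 0 := by
        rw [hg n, hf n, LinearMap.comp_add, LinearMap.sub_comp, LinearMap.sub_comp]
        simp only [← LinearMap.comp_assoc]
        rw [c11, c12, c21, c22]
        simp only [LinearMap.zero_comp]
        rw [habba n]
        abel
      -- exactness in the middle via dimension count
      haveI i1 : Module.Finite k (V n).carrier := Module.Finite.of_basis (bV n)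
      haveI i2 : Module.Finite k (V (n + 1)).carrier := Module.Finite.of_basis (bV (n + 1))
      haveI i3 : Module.Finite k (V (n + 2)).carrier := Module.Finite.of_basis (bV (n + 2))
      have eW : (W n).carrier ≃ₗ[k] ((V n).carrier × (V (n + 2)).carrier) :=
        LinearEquiv.ofLinear (((π₁ n).toFun).prod ((π₂ n).toFun))
          (((ι₁ n).toFun).coprod ((ι₂ n).toFun))
          (by
            apply LinearMap.ext
            rintro ⟨u, w⟩
            have e1 := LinearMap.congr_fun (hb1 n) u
            have e2 := LinearMap.congr_fun (hb3 n) w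
            have e3 := LinearMap.congr_fun (hb4 n) u
            have e4 := LinearMap.congr_fun (hb2 n) w
            simp only [LinearMap.comp_apply, LinearMap.id_apply, LinearMap.zero_apply]
              at e1 e2 e3 e4
            simp only [LinearMap.comp_apply, LinearMap.coprod_apply, LinearMap.prod_apply,
              LinearMap.id_apply, Function.prod_apply, map_add]
            rw [e1, e2, e3, e4]
            simp)
          (by
            apply LinearMap.ext
            intro w
            have e5 := LinearMap.congr_fun (hb5 n) w
            simp only [LinearMap.add_apply, LinearMap.comp_apply, LinearMap.id_apply] at e5
            simp only [LinearMap.comp_apply, LinearMap.coprod_apply, LinearMap.prod_apply,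
              LinearMap.id_apply, Pi.prod]
            exact e5)
      haveI iW : Module.Finite k (W n).carrier := Module.Finite.equiv eW.symm
      have hfinW : Module.finrank k (W n).carrier = n + (n + 2) := by
        rw [LinearEquiv.finrank_eq eW, Module.finrank_prod,
          Module.finrank_eq_card_basis (bV n), Module.finrank_eq_card_basis (bV (n + 2)),
          Fintype.card_fin, Fintype.card_fin]
      have hfr : Module.finrank k (V (n + 1)).carrier = n + 1 := by
        rw [Module.finrank_eq_card_basis (bV (n + 1)), Fintype.card_fin]
      have hkerg : Module.finrank k (LinearMap.ker (g n).toFun) = n + 1 := by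
        have hrn := LinearMap.finrank_range_add_finrank_ker (g n).toFun
        rw [LinearMap.range_eq_top.mpr hgsurj, finrank_top, hfr, hfinW] at hrn
        omega
      have hranf : Module.finrank k (LinearMap.range (f n).toFun) = n + 1 := by
        rw [LinearMap.finrank_range_of_inj hfinj, hfr]
      have hexact : LinearMap.range (f n).toFun = LinearMap.ker (g n).toFun :=
        Submodule.eq_of_le_of_finrank_eq (LinearMap.range_le_ker_iff.mpr hgf0)
          (by rw [hranf, hkerg])
      refine ⟨⟨hfinj, hgsurj, hexact⟩, ?_, jordan_indec bΓ (bV (n + 1)) hΓ hA hN,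
        jordan_indec bΓ (bV (n + 1)) hΓ hA hN, ?_, ?_⟩
      · -- non-split
        rintro ⟨s, hs⟩
        have hs' : (g n).toFun ∘ₗ s.toFun = LinearMap.id := congrArg RComodHom.toFun hs
        set s1 := (π₁ n).comp s with hs1def
        set s2 := (π₂ n).comp s with hs2def
        set v0 : (V (n + 1)).carrier := bV (n + 1) ⟨0, hN⟩ with hv0
        set top : (V (n + 1)).carrier := bV (n + 1) ⟨n, by omega⟩ with htop
        have htopE : top = E bΓ (V (n + 1)) n v0 := by
          rw [htop, hv0, ← BV_lt (bV (n + 1)) ⟨0, hN⟩, E_BV bΓ (bV (n + 1)) hA]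
          rw [show ((⟨0, hN⟩ : Fin (n + 1)).1 + n) = n from Nat.zero_add n]
          rw [← BV_lt (bV (n + 1)) ⟨n, by omega⟩]
        have hs1top : s1.toFun top = 0 := by
          rw [htopE]
          have hc := LinearMap.congr_fun (E_comm bΓ s1.toFun s1.comm n) v0
          simp only [LinearMap.comp_apply] at hc
          rw [← hc, E_jordan_zero bΓ (bV n) (hV n) n le_rfl]
          simp
        set w := s2.toFun v0 with hwdef
        have hs2top : s2.toFun top = E bΓ (V (n + 2)) n w := by
          rw [htopE]
          have hc := LinearMap.congr_fun (E_comm bΓ s2.toFun s2.comm n) v0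
          simp only [LinearMap.comp_apply] at hc
          exact hc.symm
        have hE1w : E bΓ (V (n + 2)) 1 (E bΓ (V (n + 2)) n w) = 0 := by
          rw [E_E bΓ hΓ, show 1 + n = n + 1 from by omega]
          have h3 := LinearMap.congr_fun (E_comm bΓ s2.toFun s2.comm (n + 1)) v0
          simp only [LinearMap.comp_apply] at h3
          rw [hwdef, h3, E_jordan_zero bΓ (bV (n + 1)) hA (n + 1) le_rfl]
          simp
        have hrepr0 : ∀ sj : Fin (n + 2), sj.1 < n + 1 →
            (bV (n + 2)).repr (E bΓ (V (n + 2)) n w) sj = 0 := by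
          intro sj hsj
          have hc := LinearMap.congr_fun
            (coordTop bΓ (bV (n + 2)) (hV (n + 2)) (by omega) sj) (E bΓ (V (n + 2)) n w)
          simp only [LinearMap.comp_apply] at hc
          rw [← Module.Basis.coord_apply, ← hc]
          have h4 := E_E bΓ hΓ (V (n + 2)) (n - sj.1) 1 (E bΓ (V (n + 2)) n w)
          rw [hE1w, map_zero] at h4
          rw [show (n + 2 - 1 - sj.1) = (n - sj.1 + 1) from by omega, ← h4, map_zero]
        have hbEnw : (b (n + 1)).toFun (E bΓ (V (n + 2)) n w) = 0 := by
          conv_lhs => rw [← (bV (n + 2)).sum_repr (E bΓ (V (n + 2)) n w)]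
          rw [map_sum]
          apply Finset.sum_eq_zero
          intro sj _
          rw [map_smul]
          by_cases hsj : sj.1 < n + 1
          · rw [hrepr0 sj hsj, zero_smul]
          · rw [hb (n + 1) sj, dif_neg (show ¬ (sj.1 < n + 1) from hsj), smul_zero]
        have hconc := LinearMap.congr_fun hs' top
        rw [LinearMap.comp_apply, LinearMap.id_apply, hg n] at hconc
        simp only [LinearMap.sub_apply, LinearMap.comp_apply] at hconc
        have hπ1 : (π₁ n).toFun (s.toFun top) = 0 := hs1top
        have hπ2 : (π₂ n).toFun (s.toFun top) = E bΓ (V (n + 2)) n w := hs2top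
        rw [hπ1, hπ2, map_zero, hbEnw, sub_zero] at hconc
        exact (bV (n + 1)).ne_zero ⟨n, by omega⟩ hconc.symm
      · -- lifting property
        intro X u hns
        set ψ : X.carrier →ₗ[k] k :=
          (bV (n + 1)).coord ⟨n + 1 - 1, by omega⟩ ∘ₗ u.toFun with hψdef
        have hψN : ψ ∘ₗ E bΓ X (n + 1) = 0 := hom_psi_zero bΓ (bV (n + 1)) hA hN u
        have hu : u.toFun = uFun bΓ (bV (n + 1)) X ψ := hom_eq_uFun bΓ (bV (n + 1)) hA hN u
        have hker : ∀ y, E bΓ X (n + 1) y = 0 → ψ (E bΓ X n y) = 0 := by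
          intro y hy
          by_contra hne
          obtain ⟨y', hy'0, hy'1, hy'2⟩ := adjust_y bΓ hΓ X n ψ y hy hne
          apply hns
          refine ⟨sHom bΓ (bV (n + 1)) hΓ hA X y' hy'0, ?_⟩
          apply RComodHom.ext
          show u.toFun ∘ₗ sFun bΓ (bV (n + 1)) X y' = LinearMap.id
          rw [hu]
          exact uFun_sFun_id bΓ (bV (n + 1)) hΓ hA hN X ψ y' hy'0 hy'1 hy'2
        obtain ⟨ψ₂, hψ₂⟩ := exists_comp_eq X.carrier (E bΓ X (n + 1)) (-(ψ ∘ₗ E bΓ X n))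
          (fun y hy => by
            simp only [LinearMap.neg_apply, LinearMap.comp_apply]
            rw [hker y hy, neg_zero])
        have hψ₂pt : ∀ x, ψ₂ (E bΓ X (n + 1) x) = -(ψ (E bΓ X n x)) := by
          intro x
          have hc := LinearMap.congr_fun hψ₂ x
          simpa using hc
        have hψ₂N : ψ₂ ∘ₗ E bΓ X (n + 2) = 0 := by
          ext x
          have h1 := E_E bΓ hΓ X (n + 1) 1 x
          simp only [LinearMap.comp_apply, LinearMap.zero_apply]
          rw [← h1, hψ₂pt (E bΓ X 1 x), E_E bΓ hΓ]
          have h2 := LinearMap.congr_fun hψN x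
          simp only [LinearMap.comp_apply, LinearMap.zero_apply] at h2
          rw [h2, neg_zero]
        set ψ₁ : X.carrier →ₗ[k] k := ψ + ψ₂ ∘ₗ E bΓ X 1 with hψ₁def
        have hψ₁N : ψ₁ ∘ₗ E bΓ X n = 0 := by
          ext x
          simp only [hψ₁def, LinearMap.add_apply, LinearMap.comp_apply,
            LinearMap.add_comp, LinearMap.zero_apply]
          rw [E_E bΓ hΓ, show 1 + n = n + 1 from by omega, hψ₂pt x, add_neg_cancel]
        set h₁ := uHom bΓ (bV n) hΓ (hV n) X ψ₁ hψ₁N with hh₁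
        set h₂ := uHom bΓ (bV (n + 2)) hΓ (hV (n + 2)) X ψ₂ hψ₂N with hh₂
        refine ⟨addHom ((ι₁ n).comp h₁) ((ι₂ n).comp h₂), ?_⟩
        apply RComodHom.ext
        show (g n).toFun ∘ₗ ((ι₁ n).toFun ∘ₗ h₁.toFun + (ι₂ n).toFun ∘ₗ h₂.toFun) = u.toFun
        have hred : (g n).toFun ∘ₗ ((ι₁ n).toFun ∘ₗ h₁.toFun + (ι₂ n).toFun ∘ₗ h₂.toFun)
            = (a n).toFun ∘ₗ h₁.toFun - (b (n + 1)).toFun ∘ₗ h₂.toFun := by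
          rw [hg n, LinearMap.comp_add, LinearMap.sub_comp, LinearMap.sub_comp]
          simp only [← LinearMap.comp_assoc]
          rw [c11, c12, c21, c22]
          simp only [LinearMap.zero_comp]
          abel
        rw [hred, hu]
        apply LinearMap.ext
        intro x
        simp only [LinearMap.sub_apply, LinearMap.comp_apply]
        rw [show h₁.toFun = uFun bΓ (bV n) X ψ₁ from rfl,
          show h₂.toFun = uFun bΓ (bV (n + 2)) X ψ₂ from rfl,
          uFun_apply, uFun_apply, uFun_apply, map_sum, map_sum]
        simp only [map_smul, haBV n, hbBV (n + 1)]
        have hsum1 : ∑ t ∈ Finset.range n, ψ₁ (E bΓ X (n - 1 - t) x) • BV (bV (n + 1)) (t + 1)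
            = ∑ j ∈ Finset.range (n + 1),
                (if j = 0 then 0 else ψ₁ (E bΓ X (n - j) x)) • BV (bV (n + 1)) j := by
          rw [Finset.sum_range_succ']
          rw [if_pos rfl, zero_smul, add_zero]
          apply Finset.sum_congr rfl
          intro t ht
          rw [if_neg (by omega)]
          rw [show n - (t + 1) = n - 1 - t from by omega]
        have hsum2 : ∑ t ∈ Finset.range (n + 2),
              ψ₂ (E bΓ X (n + 2 - 1 - t) x) • BV (bV (n + 1)) t
            = ∑ j ∈ Finset.range (n + 1), ψ₂ (E bΓ X (n + 1 - j) x) • BV (bV (n + 1)) j := by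
          rw [Finset.sum_range_succ]
          rw [BV, dif_neg (by omega : ¬ (n + 1 < n + 1)), smul_zero, add_zero]
          apply Finset.sum_congr rfl
          intro t ht
          rw [show n + 2 - 1 - t = n + 1 - t from by omega]
        rw [hsum1, hsum2, ← Finset.sum_sub_distrib]
        apply Finset.sum_congr rfl
        intro j hj
        rw [← sub_smul]
        congr 1
        by_cases hj0 : j = 0
        · subst hj0
          rw [if_pos rfl, zero_sub]
          have hp := hψ₂pt x
          rw [show n + 1 - 0 = n + 1 from rfl, hp, neg_neg]
          norm_num
        · obtain ⟨t, rfl⟩ : ∃ t, j = t + 1 := ⟨j - 1, by omega⟩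
          have htn : t + 1 ≤ n := by
            have := Finset.mem_range.mp hj
            omega
          rw [if_neg hj0]
          simp only [hψ₁def, LinearMap.add_apply, LinearMap.comp_apply]
          rw [E_E bΓ hΓ, show 1 + (n - (t + 1)) = n + 1 - (t + 1) from by omega,
            show n + 1 - 1 - (t + 1) = n - (t + 1) from by omega]
          exact add_sub_cancel_right _ _
      · -- extension property
        intro X v hns
        set y := v.toFun (bV (n + 1) ⟨0, hN⟩) with hydef
        have hvs : v.toFun = sFun bΓ (bV (n + 1)) X y := hom_from_jordan bΓ (bV (n + 1)) hA hN v
        have hyN : E bΓ X (n + 1) y = 0 := hom_y_zero bΓ (bV (n + 1)) hA v _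
        have hmem : E bΓ X n y ∈ LinearMap.range (E bΓ X (n + 1)) := by
          by_contra hnm
          obtain ⟨ψ₀, hψ₀van, hψ₀val⟩ := exists_sep_functional X.carrier
            (LinearMap.range (E bΓ X (n + 1))) (E bΓ X n y) hnm
          have hψ₀comp : ψ₀ ∘ₗ E bΓ X (n + 1) = 0 := by
            ext x
            simp only [LinearMap.comp_apply, LinearMap.zero_apply]
            exact hψ₀van _ ⟨x, rfl⟩
          obtain ⟨ψ, hψc, hψ1, hψ0⟩ := adjust_psi bΓ hΓ X n y hyN ψ₀ hψ₀comp
            (by rw [hψ₀val]; exact one_ne_zero)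
          apply hns
          refine ⟨uHom bΓ (bV (n + 1)) hΓ hA X ψ hψc, ?_⟩
          apply RComodHom.ext
          show uFun bΓ (bV (n + 1)) X ψ ∘ₗ v.toFun = LinearMap.id
          rw [hvs]
          exact uFun_sFun_id bΓ (bV (n + 1)) hΓ hA hN X ψ y hyN hψ1 hψ0
        obtain ⟨z, hz⟩ := hmem
        have hy₁ : E bΓ X n (y - E bΓ X 1 z) = 0 := by
          rw [map_sub, E_E bΓ hΓ, hz, sub_self]
        have hy₂ : E bΓ X (n + 2) z = 0 := by
          have h1 := E_E bΓ hΓ X 1 (n + 1) z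
          rw [hz] at h1
          have h2 := E_E bΓ hΓ X 1 n y
          rw [h2] at h1
          have h3 : E bΓ X (1 + n) y = 0 := by
            rw [show 1 + n = n + 1 from by omega]
            exact hyN
          rw [h3] at h1
          rw [show n + 2 = 1 + (n + 1) from by omega]
          exact h1.symm
        set h₁ := sHom bΓ (bV n) hΓ (hV n) X (y - E bΓ X 1 z) hy₁ with hh₁
        set h₂ := sHom bΓ (bV (n + 2)) hΓ (hV (n + 2)) X z hy₂ with hh₂
        refine ⟨addHom (h₁.comp (π₁ n)) (h₂.comp (π₂ n)), ?_⟩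
        apply RComodHom.ext
        show (h₁.toFun ∘ₗ (π₁ n).toFun + h₂.toFun ∘ₗ (π₂ n).toFun) ∘ₗ (f n).toFun = v.toFun
        have d1 : (h₁.toFun ∘ₗ (π₁ n).toFun) ∘ₗ (ι₁ n).toFun = h₁.toFun := by
          rw [LinearMap.comp_assoc, hb1 n, LinearMap.comp_id]
        have d2 : (h₁.toFun ∘ₗ (π₁ n).toFun) ∘ₗ (ι₂ n).toFun = 0 := by
          rw [LinearMap.comp_assoc, hb3 n, LinearMap.comp_zero]
        have d3 : (h₂.toFun ∘ₗ (π₂ n).toFun) ∘ₗ (ι₁ n).toFun = 0 := by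
          rw [LinearMap.comp_assoc, hb4 n, LinearMap.comp_zero]
        have d4 : (h₂.toFun ∘ₗ (π₂ n).toFun) ∘ₗ (ι₂ n).toFun = h₂.toFun := by
          rw [LinearMap.comp_assoc, hb2 n, LinearMap.comp_id]
        have hred : (h₁.toFun ∘ₗ (π₁ n).toFun + h₂.toFun ∘ₗ (π₂ n).toFun) ∘ₗ (f n).toFun
            = h₁.toFun ∘ₗ (b n).toFun + h₂.toFun ∘ₗ (a (n + 1)).toFun := by
          rw [hf n, LinearMap.add_comp, LinearMap.comp_add, LinearMap.comp_add]
          simp only [← LinearMap.comp_assoc]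
          rw [d1, d2, d3, d4]
          simp only [LinearMap.zero_comp]
          abel
        rw [hred, hvs]
        apply (bV (n + 1)).ext
        intro t
        simp only [LinearMap.add_apply, LinearMap.comp_apply]
        rw [sFun_basis, hb n t, ha (n + 1) t,
          show h₂.toFun = sFun bΓ (bV (n + 2)) X z from rfl, sFun_basis]
        by_cases ht : t.1 < n
        · rw [dif_pos ht,
            show h₁.toFun = sFun bΓ (bV n) X (y - E bΓ X 1 z) from rfl, sFun_basis]
          rw [map_sub, E_E bΓ hΓ]
          simp only [Fin.val_mk]
          exact sub_add_cancel _ _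
        · rw [dif_neg ht, map_zero, zero_add]
          have htn : t.1 = n := by have := t.2; omega
          simp only [Fin.val_mk]
          rw [htn]
          exact hz
    -- exactness of the limit sequence
    · refine ⟨?_, ?_, ?_⟩
      · -- injectivity of F
        intro x y hxy
        have h1 := LinearMap.congr_fun idPF x
        have h2 := LinearMap.congr_fun idPF y
        simp only [LinearMap.comp_apply, LinearMap.id_apply] at h1 h2
        rw [← h1, ← h2, hxy]
      · -- surjectivity of G
        intro z
        refine ⟨I₁.toFun z, ?_⟩
        have h1 := LinearMap.congr_fun idGI z
        simp only [LinearMap.comp_apply, LinearMap.id_apply] at h1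
        exact h1
      · -- exactness in the middle
        apply le_antisymm
        · exact LinearMap.range_le_ker_iff.mpr hGF
        · intro z hz
          rw [LinearMap.mem_ker] at hz
          set w := z - F.toFun (P₂.toFun z) with hw
          have hP2w : P₂.toFun w = 0 := by
            rw [hw, map_sub, ← LinearMap.comp_apply P₂.toFun F.toFun,
              idPF, LinearMap.id_apply, sub_self]
          have hGw : G.toFun w = 0 := by
            rw [hw, map_sub, hz, ← LinearMap.comp_apply G.toFun F.toFun, hGF]
            simp
          have hw5 := LinearMap.congr_fun hB5 w
          simp only [LinearMap.add_apply, LinearMap.comp_apply, LinearMap.id_apply] at hw5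
          rw [hP2w, map_zero, add_zero] at hw5
          have hP1w : P₁.toFun w = 0 := by
            have h1 := LinearMap.congr_fun idGI (P₁.toFun w)
            simp only [LinearMap.comp_apply, LinearMap.id_apply] at h1
            rw [← h1, hw5]
            exact hGw
          have : w = 0 := by rw [← hw5, hP1w, map_zero]
          refine ⟨P₂.toFun z, ?_⟩
          have := sub_eq_zero.mp (hw ▸ this)
          exact this.symm
    · -- G split epi
      refine ⟨I₁, ?_⟩
      apply RComodHom.ext
      show G.toFun ∘ₗ I₁.toFun = LinearMap.id
      exact idGI
    · -- F split mono
      refine ⟨P₂, ?_⟩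
      apply RComodHom.ext
      show P₂.toFun ∘ₗ F.toFun = LinearMap.id
      exact idPF

end
end
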